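/- arXiv:1809.05739 — 7 statements merged into one kernel-verified Lean document; each statement's English description precedes it below -/
import Mathlib

section
/- Let (Ω, C) be a regular two-graph with parameters (n, a, b), with a ≥ 1. Then for every 2-element subset {α, β} of Ω: (i) twice the number of coherent 4-sets containing {α, β} equals a·b; (ii) twice the number of 4-element subsets containing {α, β} that have exactly two of their 3-element subsets in C equals 3·a·(n − a − 2); (iii) four times the number of incoherent 4-sets containing {α, β} equals (n − a − 2)·(n − 2b − 6). -/
/-!
Fix a pair `p` and let `x`, `y`, `z` count the 4-sets through `p` containing four, two and no
triples of `C`; by the two-graph axiom these are all 4-sets through `p`, so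
`2 (x + y + z) = (n - 2)(n - 3)`. Counting pairs (triple through `p`, coherent 4-set) gives
`2x = ab`. Counting incidences between triples of `C` and 4-sets through `p` gives
`4x + 2y = (n - 3)a + N`, where `N = (n - 3)a` is the number of triples meeting `p` in one point
(each point lies in `(n - 1)a / 2` triples). The same incidence count with a triple of `C` in place
of `p` yields `3a = n + 2b`, and the three formulas follow by linear algebra.
-/

open Finset

lemma Finset.card_union_eq_card_left_iff {α : Type*} [DecidableEq α] {s t : Finset α} :
    #(t ∪ s) = #t ↔ s ⊆ t := by
  rw [← union_eq_left]
  exact ⟨fun h ↦ (eq_of_subset_of_card_le subset_union_left h.le).symm, fun h ↦ by rw [h]⟩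

lemma Finset.sum_ite_add_ite {ι : Type*} (s : Finset ι) (P R : ι → Prop) [DecidablePred P]
    [DecidablePred R] (u v : ℕ) :
    ∑ i ∈ s, ((if P i then u else 0) + (if R i then v else 0)) =
      u * #{i ∈ s | P i} + v * #{i ∈ s | R i} := by
  simp only [sum_add_distrib, ← sum_filter, sum_const, smul_eq_mul, mul_comm]

namespace TwoGraph

variable {Ω : Type*} [DecidableEq Ω] {C : Finset (Finset Ω)}

def tripleCount (C : Finset (Finset Ω)) (Q : Finset Ω) : ℕ := #{t ∈ Q.powersetCard 3 | t ∈ C}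

lemma tripleCount_eq_card_filter_subset (hC3 : ∀ t ∈ C, #t = 3) (Q : Finset Ω) :
    tripleCount C Q = #{t ∈ C | t ⊆ Q} := by
  refine congrArg card (ext fun t ↦ ?_)
  simp only [mem_filter, mem_powersetCard]
  exact ⟨fun ⟨⟨htQ, _⟩, htC⟩ ↦ ⟨htC, htQ⟩, fun ⟨htC, htQ⟩ ↦ ⟨⟨htQ, hC3 t htC⟩, htC⟩⟩

lemma card_filter_superset_of_mem (hC3 : ∀ t ∈ C, #t = 3) {t₀ : Finset Ω} (ht₀ : t₀ ∈ C) :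
    #{t ∈ C | t₀ ⊆ t} = 1 := by
  rw [card_eq_one]
  refine ⟨t₀, eq_singleton_iff_unique_mem.2 ⟨mem_filter.2 ⟨ht₀, subset_rfl⟩, fun t ht ↦ ?_⟩⟩
  obtain ⟨htC, ht₀t⟩ := mem_filter.1 ht
  exact (eq_of_subset_of_card_le ht₀t (by rw [hC3 t htC, hC3 t₀ ht₀])).symm

lemma tripleCount_eq_four_iff {Q : Finset Ω} (hQ : #Q = 4) :
    tripleCount C Q = 4 ↔ ∀ t ∈ Q.powersetCard 3, t ∈ C := by
  have hcard : #(Q.powersetCard 3) = 4 := by rw [card_powersetCard, hQ]; rfl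
  rw [tripleCount, ← hcard, card_filter_eq_iff]

lemma tripleCount_eq_zero_iff {Q : Finset Ω} :
    tripleCount C Q = 0 ↔ ∀ t ∈ Q.powersetCard 3, t ∉ C :=
  card_filter_eq_zero_iff

lemma tripleCount_eq_zero_or_two_or_four {Q : Finset Ω} (hQ : #Q = 4)
    (heven : Even (tripleCount C Q)) :
    tripleCount C Q = 0 ∨ tripleCount C Q = 2 ∨ tripleCount C Q = 4 := by
  have : tripleCount C Q ≤ 4 := by
    have := card_filter_le (Q.powersetCard 3) (· ∈ C)
    rwa [card_powersetCard, hQ] at this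
  obtain ⟨k, hk⟩ := heven
  omega

lemma card_filter_card_union_eq_four_add_three {a : ℕ} (hC3 : ∀ t ∈ C, #t = 3)
    (ha : ∀ p : Finset Ω, #p = 2 → #{t ∈ C | p ⊆ t} = a) {t₀ : Finset Ω} (ht₀ : t₀ ∈ C) :
    #{t ∈ C | #(t ∪ t₀) = 4} + 3 = 3 * a := by
  have hdc := sum_card_bipartiteAbove_eq_sum_card_bipartiteBelow
    (s := t₀.powersetCard 2) (t := C) (r := (· ⊆ ·))
  have habove : ∀ q ∈ t₀.powersetCard 2, #(C.bipartiteAbove (· ⊆ ·) q) = a :=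
    fun q hq ↦ ha q (mem_powersetCard.1 hq).2
  have hbelow : ∀ t ∈ C, #((t₀.powersetCard 2).bipartiteBelow (· ⊆ ·) t) =
      (if t₀ ⊆ t then 3 else 0) + (if #(t ∪ t₀) = 4 then 1 else 0) := by
    intro t ht
    have hpairs : (t₀.powersetCard 2).bipartiteBelow (· ⊆ ·) t = (t ∩ t₀).powersetCard 2 := by
      ext q
      simp only [bipartiteBelow, mem_filter, mem_powersetCard, subset_inter_iff]
      tauto
    have hunion := card_union_add_card_inter t t₀
    have := hC3 t ht ▸ card_le_card (inter_subset_left (s₁ := t) (s₂ := t₀))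
    rw [hC3 t ht, hC3 t₀ ht₀] at hunion
    simp only [hpairs, card_powersetCard, ← card_union_eq_card_left_iff (s := t₀), hC3 t ht]
    interval_cases h : #(t ∩ t₀) <;> simp [show #(t ∪ t₀) = 6 - #(t ∩ t₀) by omega, h]
  rw [sum_congr rfl habove, sum_congr rfl hbelow, sum_ite_add_ite,
    card_filter_superset_of_mem hC3 ht₀, sum_const, card_powersetCard, hC3 t₀ ht₀,
    smul_eq_mul, Nat.choose_two_right] at hdc
  omega

variable [Fintype Ω]

def fourSetsOver (u : Finset Ω) : Finset (Finset Ω) := {Q ∈ univ.powersetCard 4 | u ⊆ Q}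

lemma card_fourSetsOver {u : Finset Ω} (hu : #u ≤ 4) :
    #(fourSetsOver u) = (Fintype.card Ω - #u).choose (4 - #u) := by
  rw [fourSetsOver, card_filter_powersetCard_subset u univ 4 (subset_univ u) hu, card_univ]

lemma fourSetsOver_eq_empty {u : Finset Ω} (hu : 4 < #u) : fourSetsOver u = ∅ :=
  filter_eq_empty_iff.2 fun Q hQ huQ ↦ by
    have := card_le_card huQ
    rw [(mem_powersetCard.1 hQ).2] at this
    omega

lemma two_mul_card_fourSetsOver {p : Finset Ω} (hp : #p = 2) :
    2 * #(fourSetsOver p) = (Fintype.card Ω - 2) * (Fintype.card Ω - 3) := by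
  rw [card_fourSetsOver (by omega), hp, Nat.choose_two_right,
    Nat.mul_div_cancel' (Nat.even_mul_pred_self _).two_dvd, Nat.sub_sub]

lemma card_fourSetsOver_union {t s : Finset Ω} (ht : #t = 3) :
    #(fourSetsOver (t ∪ s)) =
      (if s ⊆ t then Fintype.card Ω - 3 else 0) + (if #(t ∪ s) = 4 then 1 else 0) := by
  have hts : #t ≤ #(t ∪ s) := card_le_card subset_union_left
  by_cases hst : s ⊆ t
  · rw [union_eq_left.2 hst, card_fourSetsOver (by omega), ht]
    simp [hst]
  obtain h4 | h5 : #(t ∪ s) = 4 ∨ 4 < #(t ∪ s) := by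
    have := mt card_union_eq_card_left_iff.1 hst
    omega
  · simp [card_fourSetsOver, h4, hst]
  · simp [fourSetsOver_eq_empty h5, hst, h5.ne']

lemma sum_tripleCount_fourSetsOver (hC3 : ∀ t ∈ C, #t = 3) (s : Finset Ω) :
    ∑ Q ∈ fourSetsOver s, tripleCount C Q =
      (Fintype.card Ω - 3) * #{t ∈ C | s ⊆ t} + #{t ∈ C | #(t ∪ s) = 4} := by
  have hdc := sum_card_bipartiteAbove_eq_sum_card_bipartiteBelow
    (s := C) (t := fourSetsOver s) (r := (· ⊆ ·))
  have habove : ∀ t ∈ C,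
      #((fourSetsOver s).bipartiteAbove (· ⊆ ·) t) = #(fourSetsOver (t ∪ s)) := by
    intro t _
    simp only [bipartiteAbove, fourSetsOver, filter_filter, union_subset_iff, and_comm]
  simp only [bipartiteBelow, ← tripleCount_eq_card_filter_subset hC3] at hdc
  rw [← hdc, sum_congr rfl habove, sum_congr rfl fun t ht ↦ card_fourSetsOver_union (hC3 t ht),
    sum_ite_add_ite, one_mul]

section Parity

variable (heven : ∀ Q : Finset Ω, #Q = 4 → Even (tripleCount C Q)) (u : Finset Ω)
include heven

lemma card_fourSetsOver_eq_add :
    #(fourSetsOver u) = #{Q ∈ fourSetsOver u | ∀ t ∈ Q.powersetCard 3, t ∈ C} +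
      #{Q ∈ fourSetsOver u | tripleCount C Q = 2} +
      #{Q ∈ fourSetsOver u | ∀ t ∈ Q.powersetCard 3, t ∉ C} := by
  simp only [card_eq_sum_ones (fourSetsOver u), card_filter, ← sum_add_distrib]
  refine sum_congr rfl fun Q hQ ↦ ?_
  have hQ4 := (mem_powersetCard.1 (mem_filter.1 hQ).1).2
  simp only [← tripleCount_eq_four_iff hQ4, ← tripleCount_eq_zero_iff]
  rcases tripleCount_eq_zero_or_two_or_four hQ4 (heven Q hQ4) with h | h | h <;> simp [h]

lemma sum_tripleCount_fourSetsOver_eq_add :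
    ∑ Q ∈ fourSetsOver u, tripleCount C Q =
      4 * #{Q ∈ fourSetsOver u | ∀ t ∈ Q.powersetCard 3, t ∈ C} +
      2 * #{Q ∈ fourSetsOver u | tripleCount C Q = 2} := by
  simp only [card_filter, mul_sum, ← sum_add_distrib]
  refine sum_congr rfl fun Q hQ ↦ ?_
  have hQ4 := (mem_powersetCard.1 (mem_filter.1 hQ).1).2
  simp only [← tripleCount_eq_four_iff hQ4]
  rcases tripleCount_eq_zero_or_two_or_four hQ4 (heven Q hQ4) with h | h | h <;> simp [h]

end Parity

section Regular

variable {a : ℕ} (hC3 : ∀ t ∈ C, #t = 3) (ha : ∀ p : Finset Ω, #p = 2 → #{t ∈ C | p ⊆ t} = a)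
include hC3 ha

lemma two_mul_card_filter_mem (γ : Ω) :
    2 * #{t ∈ C | γ ∈ t} = (Fintype.card Ω - 1) * a := by
  have hdc := sum_card_bipartiteAbove_eq_sum_card_bipartiteBelow
    (s := univ.erase γ) (t := C) (r := fun x t ↦ γ ∈ t ∧ x ∈ t)
  have habove : ∀ x ∈ univ.erase γ, #(C.bipartiteAbove (fun x t ↦ γ ∈ t ∧ x ∈ t) x) = a := by
    intro x hx
    rw [← ha {γ, x} (card_pair (ne_of_mem_erase hx).symm)]
    simp [bipartiteAbove, insert_subset_iff]
  have hbelow : ∀ t ∈ C, #((univ.erase γ).bipartiteBelow (fun x t ↦ γ ∈ t ∧ x ∈ t) t) =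
      if γ ∈ t then 2 else 0 := by
    intro t ht
    split_ifs with hγ
    · have hbelow_eq : (univ.erase γ).bipartiteBelow (fun x t ↦ γ ∈ t ∧ x ∈ t) t = t.erase γ := by
        ext x
        simp [bipartiteBelow, hγ, and_comm]
      rw [hbelow_eq, card_erase_of_mem hγ, hC3 t ht]
    · simp [bipartiteBelow, hγ]
  rw [sum_congr rfl habove, sum_congr rfl hbelow, ← sum_filter, sum_const, sum_const,
    card_erase_of_mem (mem_univ γ), card_univ, smul_eq_mul, smul_eq_mul] at hdc
  rw [hdc, mul_comm]

lemma card_filter_card_union_eq_four_add {p : Finset Ω} (hp : #p = 2) :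
    #{t ∈ C | #(t ∪ p) = 4} + 2 * a = (Fintype.card Ω - 1) * a := by
  have hdc := sum_card_bipartiteAbove_eq_sum_card_bipartiteBelow (s := p) (t := C) (r := (· ∈ ·))
  have hbelow : ∀ t ∈ C, #(p.bipartiteBelow (· ∈ ·) t) =
      (if p ⊆ t then 2 else 0) + (if #(t ∪ p) = 4 then 1 else 0) := by
    intro t ht
    have hunion := card_union_add_card_inter t p
    rw [hC3 t ht, hp, inter_comm, ← filter_mem_eq_inter] at hunion
    have := hC3 t ht ▸ card_le_card (subset_union_left (s₁ := t) (s₂ := p))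
    simp only [bipartiteBelow, ← card_union_eq_card_left_iff (s := p), hC3 t ht]
    split_ifs <;> omega
  rw [sum_congr rfl hbelow, sum_ite_add_ite, ha p hp] at hdc
  simp only [bipartiteAbove] at hdc
  have hdeg : 2 * ∑ γ ∈ p, #{t ∈ C | γ ∈ t} = 2 * ((Fintype.card Ω - 1) * a) := by
    rw [mul_sum, sum_congr rfl fun γ _ ↦ two_mul_card_filter_mem hC3 ha γ, sum_const, hp,
      smul_eq_mul]
  omega

variable {b : ℕ} (hb : ∀ c ∈ C,
  #{Q ∈ univ.powersetCard 4 | c ⊆ Q ∧ ∀ t ∈ Q.powersetCard 3, t ∈ C} = b)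
include hb

lemma two_mul_card_coherent {p : Finset Ω} (hp : #p = 2) :
    2 * #{Q ∈ fourSetsOver p | ∀ t ∈ Q.powersetCard 3, t ∈ C} = a * b := by
  have hdc := sum_card_bipartiteAbove_eq_sum_card_bipartiteBelow (s := {t ∈ C | p ⊆ t})
    (t := {Q ∈ fourSetsOver p | ∀ t ∈ Q.powersetCard 3, t ∈ C}) (r := (· ⊆ ·))
  have habove : ∀ t ∈ {t ∈ C | p ⊆ t},
      #({Q ∈ fourSetsOver p | ∀ t ∈ Q.powersetCard 3, t ∈ C}.bipartiteAbove (· ⊆ ·) t) = b := by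
    intro t ht
    obtain ⟨htC, hpt⟩ := mem_filter.1 ht
    rw [← hb t htC]
    congr 1
    ext Q
    simp only [bipartiteAbove, fourSetsOver, mem_filter]
    exact ⟨fun ⟨⟨⟨hQ, _⟩, hcoh⟩, htQ⟩ ↦ ⟨hQ, htQ, hcoh⟩,
      fun ⟨hQ, htQ, hcoh⟩ ↦ ⟨⟨⟨hQ, hpt.trans htQ⟩, hcoh⟩, htQ⟩⟩
  have hbelow : ∀ Q ∈ {Q ∈ fourSetsOver p | ∀ t ∈ Q.powersetCard 3, t ∈ C},
      #({t ∈ C | p ⊆ t}.bipartiteBelow (· ⊆ ·) Q) = 2 := by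
    intro Q hQ
    obtain ⟨hQ, hcoh⟩ := mem_filter.1 hQ
    obtain ⟨hQ, hpQ⟩ := mem_filter.1 hQ
    have hQ4 := (mem_powersetCard.1 hQ).2
    have hsub : {t ∈ C | p ⊆ t}.bipartiteBelow (· ⊆ ·) Q = {t ∈ Q.powersetCard 3 | p ⊆ t} := by
      ext t
      simp only [bipartiteBelow, mem_filter, mem_powersetCard]
      exact ⟨fun ⟨⟨htC, hpt⟩, htQ⟩ ↦ ⟨⟨htQ, hC3 t htC⟩, hpt⟩,
        fun ⟨⟨htQ, ht3⟩, hpt⟩ ↦ ⟨⟨hcoh t (mem_powersetCard.2 ⟨htQ, ht3⟩), hpt⟩, htQ⟩⟩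
    rw [hsub, card_filter_powersetCard_subset p Q 3 hpQ (by omega), hQ4, hp]
    rfl
  rw [sum_congr rfl habove, sum_congr rfl hbelow, sum_const, sum_const, ha p hp] at hdc
  simpa [mul_comm] using hdc.symm

lemma three_mul_eq_card_add_two_mul (heven : ∀ Q : Finset Ω, #Q = 4 → Even (tripleCount C Q))
    {t₀ : Finset Ω} (ht₀ : t₀ ∈ C) :
    3 * a = Fintype.card Ω + 2 * b := by
  have hsum := sum_tripleCount_fourSetsOver hC3 t₀
  rw [sum_tripleCount_fourSetsOver_eq_add heven, card_filter_superset_of_mem hC3 ht₀] at hsum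
  have hcard := card_fourSetsOver_eq_add heven t₀
  have hincoh : {Q ∈ fourSetsOver t₀ | ∀ t ∈ Q.powersetCard 3, t ∉ C} = ∅ :=
    filter_eq_empty_iff.2 fun Q hQ hincoh ↦ hincoh t₀
      (mem_powersetCard.2 ⟨(mem_filter.1 hQ).2, hC3 t₀ ht₀⟩) ht₀
  have hcoh : #{Q ∈ fourSetsOver t₀ | ∀ t ∈ Q.powersetCard 3, t ∈ C} = b := by
    rw [← hb t₀ ht₀, fourSetsOver, filter_filter]
  have hS : #(fourSetsOver t₀) = Fintype.card Ω - 3 := by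
    rw [card_fourSetsOver (by rw [hC3 t₀ ht₀]; omega), hC3 t₀ ht₀, Nat.choose_one_right]
  rw [hincoh, card_empty, hcoh, hS] at hcard
  have hK := card_filter_card_union_eq_four_add_three hC3 ha ht₀
  have hn : 3 ≤ Fintype.card Ω := hC3 t₀ ht₀ ▸ card_le_univ t₀
  omega

end Regular

end TwoGraph

open TwoGraph

/-- **Proposition 4.1 (Gillespie).** In a regular two-graph with parameters `(n, a, b)`,
every pair of points lies in exactly `ab/2` coherent 4-sets, in exactly `3a(n-a-2)/2`
4-sets having exactly two 3-subsets in `C`, and in exactly `(n-a-2)(n-2b-6)/4`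
incoherent 4-sets. -/
theorem stmt_3 {Ω : Type*} [Fintype Ω] [DecidableEq Ω]
    (C : Finset (Finset Ω)) (n a b : ℕ) (ha1 : 1 ≤ a)
    (hC3 : ∀ c ∈ C, c.card = 3)
    (heven : ∀ Q : Finset Ω, Q.card = 4 →
      Even (((Q.powersetCard 3).filter (· ∈ C)).card))
    (hn : Fintype.card Ω = n)
    (ha : ∀ p : Finset Ω, p.card = 2 → (C.filter fun c => p ⊆ c).card = a)
    (hb : ∀ c ∈ C, (((univ : Finset Ω).powersetCard 4).filter
      (fun Q => c ⊆ Q ∧ ∀ t ∈ Q.powersetCard 3, t ∈ C)).card = b) :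
    ∀ α β : Ω, α ≠ β →
      (2 * ((((univ : Finset Ω).powersetCard 4).filter
          (fun Q => {α, β} ⊆ Q ∧ ∀ t ∈ Q.powersetCard 3, t ∈ C)).card : ℤ)
        = a * b) ∧
      (2 * ((((univ : Finset Ω).powersetCard 4).filter
          (fun Q => {α, β} ⊆ Q ∧ ((Q.powersetCard 3).filter (· ∈ C)).card = 2)).card : ℤ)
        = 3 * a * ((n : ℤ) - a - 2)) ∧
      (4 * ((((univ : Finset Ω).powersetCard 4).filter
          (fun Q => {α, β} ⊆ Q ∧ ∀ t ∈ Q.powersetCard 3, t ∉ C)).card : ℤ)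
        = ((n : ℤ) - a - 2) * ((n : ℤ) - 2 * b - 6)) := by
  intro α β hne
  have hp : #({α, β} : Finset Ω) = 2 := card_pair hne
  have hpC : {t ∈ C | {α, β} ⊆ t}.Nonempty := card_pos.1 (by rw [ha _ hp]; exact ha1)
  obtain ⟨t₀, ht₀⟩ : C.Nonempty := hpC.mono (filter_subset _ C)
  have hn3 : 3 ≤ n := hn ▸ hC3 t₀ ht₀ ▸ card_le_univ t₀
  have hrel := three_mul_eq_card_add_two_mul hC3 ha hb heven ht₀
  have hcoh := two_mul_card_coherent hC3 ha hb hp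
  have hsum := sum_tripleCount_fourSetsOver hC3 {α, β}
  rw [sum_tripleCount_fourSetsOver_eq_add heven, ha _ hp] at hsum
  have hN := card_filter_card_union_eq_four_add hC3 ha hp
  have hcard := two_mul_card_fourSetsOver hp
  rw [card_fourSetsOver_eq_add heven] at hcard
  simp only [fourSetsOver, filter_filter] at hcoh hsum hcard
  unfold tripleCount at hsum hcard
  subst hn
  zify [hn3, (by omega : 1 ≤ Fintype.card Ω), (by omega : 2 ≤ Fintype.card Ω)]
    at hrel hcoh hsum hN hcard ⊢
  refine ⟨by linear_combination hcoh, by linear_combination hsum - 2 * hcoh + hN + a * hrel, ?_⟩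
  linear_combination 2 * hcard + 2 * hcoh - 2 * hsum - 2 * hN - (Fintype.card Ω - 2 : ℤ) * hrel
end

section
/- Let (Ω, C) be a regular two-graph with parameters (n, a, b), with a ≥ 1, and for α, β ∈ Ω set S_{αβ} = {γ ∈ Ω : {α,β,γ} ∈ C}. Then: (i) for every 2-element subset {α, β} of Ω, twice the number of 2-element subsets {γ, δ} of Ω with α ∈ S_{γδ} and β ∈ S_{γδ} equals a(a−1) (so the sets S_{γδ} form a 2-(n, a, a(a−1)/2) design); (ii) for pairwise distinct α, β, γ ∈ Ω, if {α,β,γ} ∈ C then |S_{αβ} ∩ S_{αγ}| = b, while if no 3-element subset of {α,β,γ} is in C then 2·|S_{αβ} ∩ S_{αγ}| = a. -/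
/-!
Everything rests on the two-graph axiom read on a 4-set `{α, β, γ, δ}`: a point `δ` outside a
triple `{α, β, γ}` lies in an odd number of `S_{αβ}, S_{αγ}, S_{βγ}` if the triple is in `C` and
in an even number otherwise.

For a triple in `C` this says that `δ ∈ S_{αβ} ∩ S_{αγ}` exactly when `{α, β, γ, δ}` is coherent,
so `|S_{αβ} ∩ S_{αγ}| = b`; summing the parity over all `δ` gives `3a = n + 2b`. For a triple not
in `C`, `S_{αβ}` is the disjoint union of `S_{αβ} ∩ S_{αγ}` and `S_{αβ} ∩ S_{βγ}`, and the three
resulting equations force each intersection to have size `a / 2`.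

For the design property, count the pairs `({γ, δ}, γ)` with `α, β ∈ S_{γδ}`: the point `γ`
contributes `|S_{γα} ∩ S_{γβ}|`, which is `b` for the `a` points of `S_{αβ}`, `0` for `γ = α, β`
and `a / 2` for the remaining `n - a - 2` points; with `n = 3a - 2b` the total is `a (a - 1)`.
-/

open Finset

/-- The set `S_{xy} = {z : {x,y,z} ∈ C}` associated to a two-graph `(Ω, C)`. -/
def Sset {Ω : Type*} [Fintype Ω] [DecidableEq Ω] (C : Finset (Finset Ω)) (x y : Ω) :
    Finset Ω :=
  univ.filter fun z => ({x, y, z} : Finset Ω) ∈ C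

namespace Finset

variable {α : Type*}

theorem even_card_filter_singleton (a : α) (p : α → Prop) [DecidablePred p] :
    Even #{x ∈ {a} | p x} ↔ ¬ p a := by
  rw [filter_singleton]
  split_ifs with h <;> simp [h]

variable [DecidableEq α]

theorem even_card_filter_insert {s : Finset α} {a : α} (ha : a ∉ s) (p : α → Prop)
    [DecidablePred p] : Even #{x ∈ insert a s | p x} ↔ (Even #{x ∈ s | p x} ↔ ¬ p a) := by
  rw [filter_insert]
  split_ifs with h
  · rw [card_insert_of_notMem fun h' => ha (mem_of_mem_filter a h'), Nat.even_add_one]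
    tauto
  · tauto

theorem powersetCard_eq_image_erase {s : Finset α} {n : ℕ} (hs : #s = n + 1) :
    s.powersetCard n = s.image s.erase := by
  ext t
  simp only [mem_powersetCard, mem_image]
  constructor
  · rintro ⟨hts, ht⟩
    obtain ⟨x, hx, rfl⟩ := exists_eq_insert_iff.mpr ⟨hts, by omega⟩
    exact ⟨x, mem_insert_self x t, erase_insert hx⟩
  · rintro ⟨x, hx, rfl⟩
    exact ⟨erase_subset x s, by rw [card_erase_of_mem hx, hs]; rfl⟩

theorem card_filter_powersetCard_eq_card_filter_erase {s : Finset α} {n : ℕ} (hs : #s = n + 1)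
    (p : Finset α → Prop) [DecidablePred p] :
    #{t ∈ s.powersetCard n | p t} = #{x ∈ s | p (s.erase x)} := by
  rw [powersetCard_eq_image_erase hs, filter_image,
    card_image_of_injOn (s.erase_injOn.mono (filter_subset _ _))]

theorem forall_mem_powersetCard_iff_forall_erase {s : Finset α} {n : ℕ} (hs : #s = n + 1)
    (p : Finset α → Prop) : (∀ t ∈ s.powersetCard n, p t) ↔ ∀ x ∈ s, p (s.erase x) := by
  rw [powersetCard_eq_image_erase hs, forall_mem_image]

theorem sum_card_filter_mem [Fintype α] (B : Finset (Finset α)) :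
    ∑ x, #{b ∈ B | x ∈ b} = ∑ b ∈ B, #b := by
  have := sum_card_bipartiteAbove_eq_sum_card_bipartiteBelow (· ∈ ·) (s := univ) (t := B)
  simpa only [bipartiteAbove, bipartiteBelow, filter_mem_eq_inter, univ_inter] using this

end Finset

structure IsTwoGraph {Ω : Type*} [DecidableEq Ω] (C : Finset (Finset Ω)) : Prop where
  card_eq_three : ∀ c ∈ C, #c = 3
  even_card_filter_mem : ∀ Q : Finset Ω, #Q = 4 → Even #{t ∈ Q.powersetCard 3 | t ∈ C}

section

variable {Ω : Type*} [Fintype Ω] [DecidableEq Ω] {C : Finset (Finset Ω)}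

theorem mem_Sset {x y z : Ω} : z ∈ Sset C x y ↔ {x, y, z} ∈ C := by
  simp [Sset]

theorem mem_Sset_iff_insert {x y z : Ω} : z ∈ Sset C x y ↔ insert z {x, y} ∈ C := by
  rw [mem_Sset, insert_comm z x, pair_comm z y]

theorem Sset_comm (x y : Ω) : Sset C x y = Sset C y x := by
  ext z
  simp only [mem_Sset, insert_comm]

theorem forall_mem_powersetCard_insert_iff {α β γ δ : Ω} (hαβ : α ≠ β) (hαγ : α ≠ γ)
    (hβγ : β ≠ γ) (hδ : δ ∉ ({α, β, γ} : Finset Ω)) :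
    (∀ t ∈ (insert δ {α, β, γ} : Finset Ω).powersetCard 3, t ∈ C) ↔
      {α, β, γ} ∈ C ∧ δ ∈ Sset C β γ ∧ δ ∈ Sset C α γ ∧ δ ∈ Sset C α β := by
  obtain ⟨hδα, hδβ, hδγ⟩ : δ ≠ α ∧ δ ≠ β ∧ δ ≠ γ := by
    simpa only [mem_insert, mem_singleton, not_or] using hδ
  rw [forall_mem_powersetCard_iff_forall_erase (by simp [*]), forall_mem_insert,
    forall_mem_insert, forall_mem_insert]
  simp only [mem_Sset_iff_insert, mem_insert, mem_singleton, forall_eq, hδα, hδβ, hδγ, hαβ, hαγ,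
    hβγ, or_self, not_false_eq_true, ne_eq, erase_insert_eq_erase, erase_insert_of_ne,
    erase_eq_of_notMem, erase_singleton, insert_empty_eq]

namespace IsTwoGraph

theorem ne_of_mem_Sset (hC : IsTwoGraph C) {x y z : Ω} (h : z ∈ Sset C x y) :
    x ≠ y ∧ x ≠ z ∧ y ≠ z := by
  have h3 := hC.card_eq_three _ (mem_Sset.mp h)
  refine ⟨?_, ?_, ?_⟩ <;> rintro rfl <;>
    simp only [mem_insert, mem_singleton, true_or, or_true, insert_eq_of_mem] at h3 <;>
    grind [card_le_two]

theorem Sset_self (hC : IsTwoGraph C) (x : Ω) : Sset C x x = ∅ :=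
  eq_empty_of_forall_notMem fun _ hz => (hC.ne_of_mem_Sset hz).1 rfl

theorem parity_of_notMem (hC : IsTwoGraph C) {α β γ δ : Ω} (hαβ : α ≠ β) (hαγ : α ≠ γ)
    (hβγ : β ≠ γ) (hδ : δ ∉ ({α, β, γ} : Finset Ω)) :
    (δ ∈ Sset C α β ↔ δ ∈ Sset C α γ) ↔ (δ ∈ Sset C β γ ↔ {α, β, γ} ∈ C) := by
  obtain ⟨hδα, hδβ, hδγ⟩ : δ ≠ α ∧ δ ≠ β ∧ δ ≠ γ := by
    simpa only [mem_insert, mem_singleton, not_or] using hδ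
  have hQ : #(insert δ {α, β, γ}) = 3 + 1 := by simp [*]
  have heven := hC.even_card_filter_mem _ hQ
  rw [card_filter_powersetCard_eq_card_filter_erase hQ] at heven
  simp only [even_card_filter_insert, mem_insert, mem_singleton, hδα, hδβ, hδγ, hαβ, hαγ, hβγ,
    or_self, not_false_eq_true, ne_eq, erase_insert_eq_erase, erase_insert_of_ne,
    erase_eq_of_notMem, erase_singleton, insert_empty_eq, even_card_filter_singleton] at heven
  simp only [mem_Sset_iff_insert]
  tauto

theorem parity (hC : IsTwoGraph C) {α β γ : Ω} (hαβ : α ≠ β) (hαγ : α ≠ γ) (hβγ : β ≠ γ)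
    (δ : Ω) : (δ ∈ Sset C α β ↔ δ ∈ Sset C α γ) ↔ (δ ∈ Sset C β γ ↔ {α, β, γ} ∈ C) := by
  have left_notMem (x y : Ω) : x ∉ Sset C x y := fun h => (hC.ne_of_mem_Sset h).2.1 rfl
  have right_notMem (x y : Ω) : y ∉ Sset C x y := fun h => (hC.ne_of_mem_Sset h).2.2 rfl
  by_cases hδ : δ ∈ ({α, β, γ} : Finset Ω)
  · simp only [mem_insert, mem_singleton] at hδ
    rcases hδ with rfl | rfl | rfl
    · simp only [left_notMem, mem_Sset, insert_comm δ β, pair_comm δ γ]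
    · simp only [left_notMem, right_notMem, mem_Sset, pair_comm δ γ]
    · simp only [right_notMem, mem_Sset, iff_false, false_iff]
  · exact hC.parity_of_notMem hαβ hαγ hβγ hδ

theorem card_Sset (hC : IsTwoGraph C) {a : ℕ}
    (ha : ∀ p : Finset Ω, #p = 2 → #{c ∈ C | p ⊆ c} = a) {x y : Ω} (hxy : x ≠ y) :
    #(Sset C x y) = a := by
  rw [← ha {x, y} (card_pair hxy)]
  apply card_nbij (insert · {x, y})
  · intro z hz
    simp [mem_Sset_iff_insert.mp hz, subset_insert]
  · intro z₁ hz₁ z₂ _ h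
    obtain ⟨-, hxz, hyz⟩ := hC.ne_of_mem_Sset hz₁
    refine (insert_inj ?_).mp h
    simp only [mem_insert, mem_singleton, not_or]
    exact ⟨hxz.symm, hyz.symm⟩
  · intro c hc
    simp only [coe_filter, Set.mem_ofPred_eq] at hc
    obtain ⟨z, hz, rfl⟩ := exists_eq_insert_iff.mpr
      ⟨hc.2, by rw [card_pair hxy, hC.card_eq_three c hc.1]⟩
    exact ⟨z, mem_Sset_iff_insert.mpr hc.1, rfl⟩

theorem card_Sset_inter_of_mem (hC : IsTwoGraph C) {b : ℕ}
    (hb : ∀ c ∈ C, #{Q ∈ (univ : Finset Ω).powersetCard 4 |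
      c ⊆ Q ∧ ∀ t ∈ Q.powersetCard 3, t ∈ C} = b)
    {α β γ : Ω} (hαβ : α ≠ β) (hαγ : α ≠ γ) (hβγ : β ≠ γ) (hT : {α, β, γ} ∈ C) :
    #(Sset C α β ∩ Sset C α γ) = b := by
  rw [← hb _ hT]
  have hT3 : #{α, β, γ} = 3 := hC.card_eq_three _ hT
  have coherent (δ : Ω) (hδ : δ ∉ ({α, β, γ} : Finset Ω)) :
      (∀ t ∈ (insert δ {α, β, γ} : Finset Ω).powersetCard 3, t ∈ C) ↔
        δ ∈ Sset C α β ∩ Sset C α γ := by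
    have := hC.parity hαβ hαγ hβγ δ
    rw [forall_mem_powersetCard_insert_iff hαβ hαγ hβγ hδ, mem_inter]
    tauto
  have notMem (δ : Ω) (hδ : δ ∈ Sset C α β ∩ Sset C α γ) : δ ∉ ({α, β, γ} : Finset Ω) := by
    obtain ⟨-, hαδ, hβδ⟩ := hC.ne_of_mem_Sset (mem_inter.mp hδ).1
    obtain ⟨-, -, hγδ⟩ := hC.ne_of_mem_Sset (mem_inter.mp hδ).2
    simp only [mem_insert, mem_singleton, not_or]
    exact ⟨hαδ.symm, hβδ.symm, hγδ.symm⟩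
  apply card_nbij (insert · {α, β, γ})
  · intro δ hδ
    rw [mem_coe, mem_filter, mem_powersetCard, card_insert_of_notMem (notMem δ hδ), hT3]
    exact ⟨⟨subset_univ _, rfl⟩, subset_insert _ _, (coherent δ (notMem δ hδ)).mpr hδ⟩
  · intro δ₁ hδ₁ δ₂ _ h
    exact (insert_inj (notMem δ₁ hδ₁)).mp h
  · intro Q hQ
    obtain ⟨hQ4, hTQ, hQC⟩ := mem_filter.mp (mem_coe.mp hQ)
    obtain ⟨δ, hδ, rfl⟩ :=
      exists_eq_insert_iff.mpr ⟨hTQ, by rw [hT3, (mem_powersetCard.mp hQ4).2]⟩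
    exact ⟨δ, (coherent δ hδ).mp hQC, rfl⟩

theorem card_inter_add_card_inter_of_notMem (hC : IsTwoGraph C) {α β γ : Ω} (hαβ : α ≠ β)
    (hαγ : α ≠ γ) (hβγ : β ≠ γ) (hT : {α, β, γ} ∉ C) :
    #(Sset C α β ∩ Sset C α γ) + #(Sset C α β ∩ Sset C β γ) = #(Sset C α β) := by
  have : Sset C α β ∩ Sset C β γ = Sset C α β \ Sset C α γ := by
    ext δ
    have := hC.parity hαβ hαγ hβγ δ
    simp only [mem_inter, mem_sdiff]
    tauto
  rw [this, card_inter_add_card_sdiff]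

theorem two_mul_card_Sset_inter_of_notMem (hC : IsTwoGraph C) {a : ℕ}
    (ha : ∀ p : Finset Ω, #p = 2 → #{c ∈ C | p ⊆ c} = a) {α β γ : Ω} (hαβ : α ≠ β)
    (hαγ : α ≠ γ) (hβγ : β ≠ γ) (hT : {α, β, γ} ∉ C) :
    2 * #(Sset C α β ∩ Sset C α γ) = a := by
  have h₁ := hC.card_inter_add_card_inter_of_notMem hαβ hαγ hβγ hT
  have h₂ := hC.card_inter_add_card_inter_of_notMem hαγ hαβ hβγ.symm (by rwa [pair_comm])
  have h₃ := hC.card_inter_add_card_inter_of_notMem hβγ hαβ.symm hαγ.symm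
    (by rwa [pair_comm γ α, insert_comm β α])
  rw [hC.card_Sset ha hαβ] at h₁
  rw [hC.card_Sset ha hαγ, inter_comm (Sset C α γ), Sset_comm γ β] at h₂
  rw [hC.card_Sset ha hβγ, Sset_comm β α, Sset_comm γ α, inter_comm (Sset C β γ),
    inter_comm (Sset C β γ)] at h₃
  omega

theorem card_add_card_add_card_of_mem (hC : IsTwoGraph C) {α β γ : Ω} (hαβ : α ≠ β)
    (hαγ : α ≠ γ) (hβγ : β ≠ γ) (hT : {α, β, γ} ∈ C) :
    #(Sset C α β) + #(Sset C α γ) + #(Sset C β γ)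
      = Fintype.card Ω + 2 * #(Sset C α β ∩ Sset C α γ) := by
  have pointwise (δ : Ω) :
      ((if δ ∈ Sset C α β then 1 else 0) + (if δ ∈ Sset C α γ then 1 else 0)
        + if δ ∈ Sset C β γ then 1 else 0)
      = 1 + 2 * if δ ∈ Sset C α β ∩ Sset C α γ then 1 else 0 := by
    have := hC.parity hαβ hαγ hβγ δ
    simp only [mem_inter]
    split_ifs <;> simp_all
  have := sum_congr rfl (fun δ (_ : δ ∈ univ) => pointwise δ)
  simpa only [sum_add_distrib, sum_boole, ← mul_sum, sum_const, card_univ, smul_eq_mul, mul_one,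
    filter_mem_eq_inter, univ_inter, Nat.cast_id] using this

theorem card_add_two_mul_eq_three_mul (hC : IsTwoGraph C) {a b : ℕ}
    (ha : ∀ p : Finset Ω, #p = 2 → #{c ∈ C | p ⊆ c} = a)
    (hb : ∀ c ∈ C, #{Q ∈ (univ : Finset Ω).powersetCard 4 |
      c ⊆ Q ∧ ∀ t ∈ Q.powersetCard 3, t ∈ C} = b)
    {α β γ : Ω} (hγ : γ ∈ Sset C α β) : Fintype.card Ω + 2 * b = 3 * a := by
  obtain ⟨hαβ, hαγ, hβγ⟩ := hC.ne_of_mem_Sset hγ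
  have hT : {α, β, γ} ∈ C := mem_Sset.mp hγ
  have := hC.card_add_card_add_card_of_mem hαβ hαγ hβγ hT
  rw [hC.card_Sset ha hαβ, hC.card_Sset ha hαγ, hC.card_Sset ha hβγ,
    hC.card_Sset_inter_of_mem hb hαβ hαγ hβγ hT] at this
  omega

theorem card_filter_mem_eq_card_Sset_inter (hC : IsTwoGraph C) (α β γ : Ω) :
    #{p ∈ {p ∈ (univ : Finset Ω).powersetCard 2 | insert α p ∈ C ∧ insert β p ∈ C} | γ ∈ p}
      = #(Sset C α γ ∩ Sset C β γ) := by
  symm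
  apply card_nbij (fun δ => {γ, δ})
  · intro δ hδ
    obtain ⟨hαγδ, hβγδ⟩ := mem_inter.mp hδ
    have hγδ := (hC.ne_of_mem_Sset hαγδ).2.2
    rw [mem_Sset] at hαγδ hβγδ
    simp [card_pair hγδ, hαγδ, hβγδ]
  · intro δ₁ hδ₁ δ₂ _ h
    have hγδ := (hC.ne_of_mem_Sset (mem_inter.mp hδ₁).1).2.2
    have : δ₁ ∈ ({γ, δ₂} : Finset Ω) := by
      rw [← show ({γ, δ₁} : Finset Ω) = {γ, δ₂} from h]
      exact mem_insert_of_mem (mem_singleton_self δ₁)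
    simp only [mem_insert, mem_singleton] at this
    tauto
  · intro p hp
    obtain ⟨⟨hp2, hαp, hβp⟩, hγp⟩ := by simpa only [coe_filter, mem_filter, mem_powersetCard,
      subset_univ, true_and, Set.mem_ofPred_eq] using hp
    obtain ⟨x, y, -, rfl⟩ := card_eq_two.mp hp2
    rcases mem_insert.mp hγp with rfl | hγy
    · exact ⟨y, by simp [mem_Sset, hαp, hβp], rfl⟩
    · obtain rfl := mem_singleton.mp hγy
      rw [pair_comm] at hαp hβp ⊢
      exact ⟨x, by simp [mem_Sset, hαp, hβp], rfl⟩

/-- `2 |S_{γα} ∩ S_{γβ}|` is `2b` on `S_{αβ}`, `0` at `α, β` and `a` elsewhere, written with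
correction terms on both sides so that no subtraction occurs. -/
theorem two_mul_card_Sset_inter_add_ite (hC : IsTwoGraph C) {a b : ℕ}
    (ha : ∀ p : Finset Ω, #p = 2 → #{c ∈ C | p ⊆ c} = a)
    (hb : ∀ c ∈ C, #{Q ∈ (univ : Finset Ω).powersetCard 4 |
      c ⊆ Q ∧ ∀ t ∈ Q.powersetCard 3, t ∈ C} = b)
    {α β : Ω} (hαβ : α ≠ β) (γ : Ω) :
    2 * #(Sset C α γ ∩ Sset C β γ) + (if γ ∈ ({α, β} : Finset Ω) then a else 0)
      + (if γ ∈ Sset C α β then a else 0) = a + if γ ∈ Sset C α β then 2 * b else 0 := by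
  rw [Sset_comm α γ, Sset_comm β γ]
  by_cases hγ : γ ∈ Sset C α β
  · obtain ⟨-, hαγ, hβγ⟩ := hC.ne_of_mem_Sset hγ
    rw [hC.card_Sset_inter_of_mem hb hαγ.symm hβγ.symm hαβ (mem_Sset_iff_insert.mp hγ)]
    simp only [mem_insert, mem_singleton, hαγ.symm, hβγ.symm, or_self, if_false, if_true, hγ]
    ring
  · by_cases hγαβ : γ = α ∨ γ = β
    · rcases hγαβ with rfl | rfl <;> simp [hγ, hC.Sset_self]
    · push Not at hγαβ
      rw [hC.two_mul_card_Sset_inter_of_notMem ha hγαβ.1 hγαβ.2 hαβ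
        (mem_Sset_iff_insert.not.mp hγ)]
      simp [hγ, hγαβ.1, hγαβ.2]

theorem two_mul_card_pairs (hC : IsTwoGraph C) {a b : ℕ} (ha1 : 1 ≤ a)
    (ha : ∀ p : Finset Ω, #p = 2 → #{c ∈ C | p ⊆ c} = a)
    (hb : ∀ c ∈ C, #{Q ∈ (univ : Finset Ω).powersetCard 4 |
      c ⊆ Q ∧ ∀ t ∈ Q.powersetCard 3, t ∈ C} = b)
    {α β : Ω} (hαβ : α ≠ β) :
    2 * #{p ∈ (univ : Finset Ω).powersetCard 2 | insert α p ∈ C ∧ insert β p ∈ C}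
      = a * (a - 1) := by
  set P := {p ∈ (univ : Finset Ω).powersetCard 2 | insert α p ∈ C ∧ insert β p ∈ C}
  have hS := hC.card_Sset ha hαβ
  have double_count : ∑ γ, #(Sset C α γ ∩ Sset C β γ) = 2 * #P := by
    rw [← sum_congr rfl fun γ _ => hC.card_filter_mem_eq_card_Sset_inter α β γ,
      sum_card_filter_mem, sum_congr rfl fun p hp => (mem_powersetCard.mp (mem_filter.mp hp).1).2,
      sum_const, smul_eq_mul, mul_comm]
  have hsum :=
    sum_congr rfl fun γ (_ : γ ∈ univ) => hC.two_mul_card_Sset_inter_add_ite ha hb hαβ γ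
  simp only [sum_add_distrib, ← mul_sum, double_count, sum_ite_mem, univ_inter, sum_const,
    card_pair hαβ, hS, card_univ, smul_eq_mul] at hsum
  obtain ⟨γ, hγ⟩ := card_pos.mp (hS ▸ ha1)
  have hrel := hC.card_add_two_mul_eq_three_mul ha hb hγ
  have key : 2 * (2 * #P) + 2 * a + a * a = a * (3 * a) := by rw [hsum, ← hrel]; ring
  obtain ⟨k, rfl⟩ := Nat.exists_eq_add_of_le' ha1
  rw [Nat.add_sub_cancel]
  linarith

end IsTwoGraph

end

theorem stmt_4_general {Ω : Type*} [Fintype Ω] [DecidableEq Ω]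
    (C : Finset (Finset Ω)) (a b : ℕ) (ha1 : 1 ≤ a)
    (hC3 : ∀ c ∈ C, c.card = 3)
    (heven : ∀ Q : Finset Ω, Q.card = 4 →
      Even (((Q.powersetCard 3).filter (· ∈ C)).card))
    (ha : ∀ p : Finset Ω, p.card = 2 → (C.filter fun c => p ⊆ c).card = a)
    (hb : ∀ c ∈ C, (((univ : Finset Ω).powersetCard 4).filter
      (fun Q => c ⊆ Q ∧ ∀ t ∈ Q.powersetCard 3, t ∈ C)).card = b) :
    (∀ α β : Ω, α ≠ β →
      2 * (((univ : Finset Ω).powersetCard 2).filter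
          (fun p => insert α p ∈ C ∧ insert β p ∈ C)).card = a * (a - 1)) ∧
    (∀ α β γ : Ω, α ≠ β → α ≠ γ → β ≠ γ →
      (({α, β, γ} : Finset Ω) ∈ C → (Sset C α β ∩ Sset C α γ).card = b) ∧
      (({α, β, γ} : Finset Ω) ∉ C → 2 * (Sset C α β ∩ Sset C α γ).card = a)) := by
  have hC : IsTwoGraph C := ⟨hC3, heven⟩
  exact ⟨fun α β hαβ => hC.two_mul_card_pairs ha1 ha hb hαβ,
    fun α β γ hαβ hαγ hβγ => ⟨hC.card_Sset_inter_of_mem hb hαβ hαγ hβγ,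
      hC.two_mul_card_Sset_inter_of_notMem ha hαβ hαγ hβγ⟩⟩

/-- **Theorem 4.2 (Gillespie).** In a regular two-graph with parameters `(n, a, b)`, the sets
`S_{γδ}` form a `2-(n, a, a(a-1)/2)` design, and `|S_{αβ} ∩ S_{αγ}|` equals `b` on coherent
triples and `a/2` on incoherent triples. -/
theorem stmt_4 {Ω : Type*} [Fintype Ω] [DecidableEq Ω]
    (C : Finset (Finset Ω)) (n a b : ℕ) (ha1 : 1 ≤ a)
    (hC3 : ∀ c ∈ C, c.card = 3)
    (heven : ∀ Q : Finset Ω, Q.card = 4 →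
      Even (((Q.powersetCard 3).filter (· ∈ C)).card))
    (hn : Fintype.card Ω = n)
    (ha : ∀ p : Finset Ω, p.card = 2 → (C.filter fun c => p ⊆ c).card = a)
    (hb : ∀ c ∈ C, (((univ : Finset Ω).powersetCard 4).filter
      (fun Q => c ⊆ Q ∧ ∀ t ∈ Q.powersetCard 3, t ∈ C)).card = b) :
    (∀ α β : Ω, α ≠ β →
      2 * (((univ : Finset Ω).powersetCard 2).filter
          (fun p => insert α p ∈ C ∧ insert β p ∈ C)).card = a * (a - 1)) ∧
    (∀ α β γ : Ω, α ≠ β → α ≠ γ → β ≠ γ →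
      (({α, β, γ} : Finset Ω) ∈ C → (Sset C α β ∩ Sset C α γ).card = b) ∧
      (({α, β, γ} : Finset Ω) ∉ C → 2 * (Sset C α β ∩ Sset C α γ).card = a)) :=
  stmt_4_general C a b ha1 hC3 heven ha hb
end

section
/- Let 0 < κ < 1 and let v : Ω → EuclideanSpace ℝ (Fin d) be a finite family of unit vectors such that |⟪v i, v j⟫| = κ for all i ≠ j and ⟪v i, v j⟫ · ⟪v i, v k⟫ · ⟪v j, v k⟫ > 0 for all pairwise distinct i, j, k (an incoherent family of equiangular lines). Then the family v is linearly independent over ℝ; in particular |Ω| ≤ d. -/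
/-!
Fixing a base vector `v i₀` and the signs `εᵢ = ⟪v i₀, v i⟫ / κ`, incoherence forces
`⟪v i, v j⟫ = κ εᵢ εⱼ` for all `i ≠ j`. The Gram matrix of `v` is then
`(1 - κ) I + κ ε εᵀ`, a positive definite matrix plus a positive semidefinite one, and a family
with positive definite Gram matrix is linearly independent.
-/

open scoped RealInnerProductSpace

open Matrix

lemma mul_eq_of_abs_eq_of_mul_pos {x y z κ : ℝ} (hκ : 0 < κ) (hx : |x| = κ) (hy : |y| = κ)
    (hz : |z| = κ) (hpos : 0 < x * y * z) : x * y = κ * z := by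
  have hprod : x * y * z = κ ^ 3 := by
    rw [← abs_of_pos hpos, abs_mul, abs_mul, hx, hy, hz]; ring
  have hz2 : z ^ 2 = κ ^ 2 := by rw [← sq_abs, hz]
  refine mul_left_cancel₀ (pow_ne_zero 2 hκ.ne') ?_
  linear_combination z * hprod - x * y * hz2

section Equiangular

variable {Ω E : Type*} [NormedAddCommGroup E] [InnerProductSpace ℝ E] {κ : ℝ} {v : Ω → E}

lemma exists_sign_of_incoherent (hκ : 0 < κ) (hangle : ∀ i j, i ≠ j → |⟪v i, v j⟫| = κ)
    (hinc : ∀ i j k, i ≠ j → i ≠ k → j ≠ k → 0 < ⟪v i, v j⟫ * ⟪v i, v k⟫ * ⟪v j, v k⟫) :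
    ∃ ε : Ω → ℝ, (∀ i, ε i ^ 2 = 1) ∧ ∀ i j, i ≠ j → ⟪v i, v j⟫ = κ * (ε i * ε j) := by
  classical
  rcases isEmpty_or_nonempty Ω with hΩ | ⟨⟨i₀⟩⟩
  · exact ⟨1, fun i => isEmptyElim i, fun i => isEmptyElim i⟩
  refine ⟨fun i => if i = i₀ then 1 else ⟪v i₀, v i⟫ / κ, fun i => ?_, fun i j hij => ?_⟩
  · dsimp only
    split_ifs with hi
    · exact one_pow 2
    · rw [div_pow, ← sq_abs, hangle i₀ i (Ne.symm hi), div_self (pow_ne_zero 2 hκ.ne')]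
  · by_cases hi : i = i₀
    · subst hi
      simp only [↓reduceIte, if_neg (Ne.symm hij)]
      field_simp
    by_cases hj : j = i₀
    · subst hj
      simp only [↓reduceIte, if_neg hij]
      rw [real_inner_comm]
      field_simp
    simp only [if_neg hi, if_neg hj]
    have h := mul_eq_of_abs_eq_of_mul_pos hκ (hangle i₀ i (Ne.symm hi))
      (hangle i₀ j (Ne.symm hj)) (hangle i j hij) (hinc i₀ i j (Ne.symm hi) (Ne.symm hj) hij)
    field_simp
    linarith

lemma gram_eq_of_inner_eq_sign_mul [DecidableEq Ω] (hunit : ∀ i, ‖v i‖ = 1) {ε : Ω → ℝ}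
    (hε : ∀ i, ε i ^ 2 = 1) (hinner : ∀ i j, i ≠ j → ⟪v i, v j⟫ = κ * (ε i * ε j)) :
    gram ℝ v = (1 - κ) • (1 : Matrix Ω Ω ℝ) + κ • vecMulVec ε ε := by
  ext i j
  simp only [gram_apply, Matrix.add_apply, Matrix.smul_apply, one_apply, vecMulVec_apply,
    smul_eq_mul]
  split_ifs with hij
  · subst hij
    rw [real_inner_self_eq_norm_sq, hunit, ← sq, hε]
    ring
  · rw [hinner i j hij]
    ring

lemma linearIndependent_of_inner_eq_sign_mul [Finite Ω] (hκ0 : 0 ≤ κ) (hκ1 : κ < 1)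
    (hunit : ∀ i, ‖v i‖ = 1) {ε : Ω → ℝ} (hε : ∀ i, ε i ^ 2 = 1)
    (hinner : ∀ i j, i ≠ j → ⟪v i, v j⟫ = κ * (ε i * ε j)) :
    LinearIndependent ℝ v := by
  classical
  have := Fintype.ofFinite Ω
  refine linearIndependent_of_posDef_gram ?_
  rw [gram_eq_of_inner_eq_sign_mul hunit hε hinner]
  exact (PosDef.one.smul (sub_pos.mpr hκ1)).add_posSemidef
    ((posSemidef_vecMulVec_self_star ε).smul hκ0)

end Equiangular

/-- **Lemma 4.3 (Gillespie).** An incoherent family of equiangular lines in `ℝ^d` is linearly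
independent; in particular it has at most `d` members. -/
theorem stmt_5 {Ω : Type*} [Fintype Ω] (d : ℕ) (κ : ℝ) (hκ0 : 0 < κ) (hκ1 : κ < 1)
    (v : Ω → EuclideanSpace ℝ (Fin d))
    (hunit : ∀ i, ‖v i‖ = 1)
    (hangle : ∀ i j : Ω, i ≠ j → |⟪v i, v j⟫| = κ)
    (hinc : ∀ i j k : Ω, i ≠ j → i ≠ k → j ≠ k →
      0 < ⟪v i, v j⟫ * ⟪v i, v k⟫ * ⟪v j, v k⟫) :
    LinearIndependent ℝ v ∧ Fintype.card Ω ≤ d := by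
  obtain ⟨ε, hε, hinner⟩ := exists_sign_of_incoherent hκ0 hangle hinc
  have hli := linearIndependent_of_inner_eq_sign_mul hκ0.le hκ1 hunit hε hinner
  exact ⟨hli, by simpa using hli.fintype_card_le_finrank⟩
end

section
/- Let (Ω, C) be a two-graph, Γ ⊆ Ω a maximal incoherent subset, γ ∈ Ω∖Γ, and α₁, α₂ ∈ Γ with {γ, α₁, α₂} ∈ C. For i = 1, 2 define Γᵢ(γ) = {δ ∈ Γ : {γ, αᵢ, δ} ∈ C}. Then Γ₁(γ) and Γ₂(γ) are disjoint, their union is Γ, and for all distinct α, β ∈ Γ: {γ, α, β} ∉ C if and only if α and β both lie in Γ₁(γ) or both lie in Γ₂(γ). -/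
/-!
In a two-graph, the parity condition on a quadruple `{γ, x, y, z}` of distinct points says that
`[x y z] = [γ x y] + [γ x z] + [γ y z]` modulo 2. For `x, y, z` in the incoherent set `Γ` the
left side vanishes, so on `Γ` the graph of pairs `{x, y}` with `{γ, x, y} ∈ C` is complete
bipartite, and its two parts are the neighbourhoods of the ends `α₁, α₂` of any of its edges.
-/

open Finset

section TwoGraph

variable {Ω : Type*} [DecidableEq Ω] {C : Finset (Finset Ω)}

theorem powersetCard_three_of_pairwise_ne {a b c d : Ω} (hab : a ≠ b) (hac : a ≠ c)
    (had : a ≠ d) (hbc : b ≠ c) (hbd : b ≠ d) (hcd : c ≠ d) :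
    ({a, b, c, d} : Finset Ω).powersetCard 3 = {{a, b, c}, {a, b, d}, {a, c, d}, {b, c, d}} := by
  simp [powersetCard_succ_insert, powersetCard_one, *]
  ext t
  simp only [mem_insert, mem_singleton]
  tauto

theorem mem_triple_iff_of_even {a b c d : Ω}
    (heven : ∀ Q : Finset Ω, Q.card = 4 → Even (((Q.powersetCard 3).filter (· ∈ C)).card))
    (hab : a ≠ b) (hac : a ≠ c) (had : a ≠ d) (hbc : b ≠ c) (hbd : b ≠ d) (hcd : c ≠ d) :
    ({b, c, d} : Finset Ω) ∈ C ↔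
      (({a, b, c} : Finset Ω) ∈ C ↔ (({a, b, d} : Finset Ω) ∈ C ↔ ({a, c, d} : Finset Ω) ∈ C)) := by
  have hcard : ({a, b, c, d} : Finset Ω).card = 4 := by simp [*]
  have hne {s t : Finset Ω} {x : Ω} (hs : x ∉ s) (ht : x ∈ t) : s ≠ t := fun h => hs (h ▸ ht)
  have hd : d ∉ ({a, b, c} : Finset Ω) := by simp [had.symm, hbd.symm, hcd.symm]
  have hc : c ∉ ({a, b, d} : Finset Ω) := by simp [hac.symm, hbc.symm, hcd]
  have hb : b ∉ ({a, c, d} : Finset Ω) := by simp [hab.symm, hbc, hbd]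
  have h₁ : ({a, b, c} : Finset Ω) ∉ ({{a, b, d}, {a, c, d}, {b, c, d}} : Finset (Finset Ω)) := by
    simp only [mem_insert, mem_singleton, not_or]
    exact ⟨hne hd (by simp), hne hd (by simp), hne hd (by simp)⟩
  have h₂ : ({a, b, d} : Finset Ω) ∉ ({{a, c, d}, {b, c, d}} : Finset (Finset Ω)) := by
    simp only [mem_insert, mem_singleton, not_or]
    exact ⟨hne hc (by simp), hne hc (by simp)⟩
  have h₃ : ({a, c, d} : Finset Ω) ∉ ({{b, c, d}} : Finset (Finset Ω)) :=
    notMem_singleton.2 (hne hb (by simp))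
  have h := heven _ hcard
  rw [powersetCard_three_of_pairwise_ne hab hac had hbc hbd hcd, card_filter,
    sum_insert h₁, sum_insert h₂, sum_insert h₃, sum_singleton] at h
  simp only [Nat.even_add, apply_ite Even, Nat.not_even_one, Even.zero, if_false_left, and_true] at h
  tauto

theorem pair_notMem (hC3 : ∀ c ∈ C, c.card = 3) (x y : Ω) : ({x, y} : Finset Ω) ∉ C :=
  fun h => by have := hC3 _ h; have := card_le_two (a := x) (b := y); omega

theorem link_notMem_iff (hC3 : ∀ c ∈ C, c.card = 3)
    (heven : ∀ Q : Finset Ω, Q.card = 4 → Even (((Q.powersetCard 3).filter (· ∈ C)).card))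
    {γ x y z : Ω} (hγx : γ ≠ x) (hγy : γ ≠ y) (hγz : γ ≠ z) (hxyz : ({x, y, z} : Finset Ω) ∉ C) :
    ({γ, y, z} : Finset Ω) ∉ C ↔
      (({γ, x, y} : Finset Ω) ∈ C ↔ ({γ, x, z} : Finset Ω) ∈ C) := by
  have hpair := pair_notMem hC3 γ
  obtain rfl | hyz := eq_or_ne y z
  · simp [hpair]
  obtain rfl | hxy := eq_or_ne x y
  · simp [hpair]
  obtain rfl | hxz := eq_or_ne x z
  · simp [pair_comm y x, hpair]
  have := mem_triple_iff_of_even heven hγx hγy hγz hxy hxz hyz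
  tauto

end TwoGraph

theorem stmt_6_general {Ω : Type*} [DecidableEq Ω]
    (C : Finset (Finset Ω))
    (hC3 : ∀ c ∈ C, c.card = 3)
    (heven : ∀ Q : Finset Ω, Q.card = 4 →
      Even (((Q.powersetCard 3).filter (· ∈ C)).card))
    (Γ : Finset Ω)
    (hinc : ∀ t ⊆ Γ, t.card = 3 → t ∉ C)
    (γ : Ω) (hγ : γ ∉ Γ)
    (α₁ α₂ : Ω) (hα₁ : α₁ ∈ Γ) (hα₂ : α₂ ∈ Γ)
    (hcoh : ({γ, α₁, α₂} : Finset Ω) ∈ C) :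
    Disjoint (Γ.filter fun δ => ({γ, α₁, δ} : Finset Ω) ∈ C)
        (Γ.filter fun δ => ({γ, α₂, δ} : Finset Ω) ∈ C) ∧
    (Γ.filter fun δ => ({γ, α₁, δ} : Finset Ω) ∈ C) ∪
        (Γ.filter fun δ => ({γ, α₂, δ} : Finset Ω) ∈ C) = Γ ∧
    ∀ α ∈ Γ, ∀ β ∈ Γ, α ≠ β →
      (({γ, α, β} : Finset Ω) ∉ C ↔
        ((α ∈ Γ.filter fun δ => ({γ, α₁, δ} : Finset Ω) ∈ C) ∧
          (β ∈ Γ.filter fun δ => ({γ, α₁, δ} : Finset Ω) ∈ C)) ∨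
        ((α ∈ Γ.filter fun δ => ({γ, α₂, δ} : Finset Ω) ∈ C) ∧
          (β ∈ Γ.filter fun δ => ({γ, α₂, δ} : Finset Ω) ∈ C))) := by
  have hlink : ∀ x ∈ Γ, ∀ y ∈ Γ, ∀ z ∈ Γ, ({γ, y, z} : Finset Ω) ∉ C ↔
      (({γ, x, y} : Finset Ω) ∈ C ↔ ({γ, x, z} : Finset Ω) ∈ C) := fun x hx y hy z hz =>
    link_notMem_iff hC3 heven (ne_of_mem_of_not_mem hx hγ).symm
      (ne_of_mem_of_not_mem hy hγ).symm (ne_of_mem_of_not_mem hz hγ).symm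
      fun h => hinc _ (by simp [insert_subset_iff, hx, hy, hz]) (hC3 _ h) h
  have hΓ₂ : ∀ δ ∈ Γ, ({γ, α₂, δ} : Finset Ω) ∈ C ↔ ({γ, α₁, δ} : Finset Ω) ∉ C :=
    fun δ hδ => by have := hlink α₁ hα₁ α₂ hα₂ δ hδ; tauto
  refine ⟨?_, ?_, fun α hα β hβ _ => ?_⟩
  · exact disjoint_filter.2 fun δ hδ h₁ h₂ => (hΓ₂ δ hδ).1 h₂ h₁
  · rw [← filter_or]
    exact filter_true_of_mem fun δ hδ => by have := hΓ₂ δ hδ; tauto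
  · simp only [mem_filter, hα, hβ, true_and, hΓ₂ α hα, hΓ₂ β hβ, hlink α₁ hα₁ α hα β hβ]
    tauto

/-- **Lemma 4.5 (Gillespie).** Let `Γ` be a maximal incoherent subset of a two-graph `(Ω, C)`,
`γ ∉ Γ` and `{γ, α₁, α₂} ∈ C` with `α₁, α₂ ∈ Γ`. Then the sets
`Γᵢ(γ) = {δ ∈ Γ : {γ, αᵢ, δ} ∈ C}` partition `Γ`, and for distinct `α, β ∈ Γ` the triple
`{γ, α, β}` is not in `C` iff `α, β` lie in the same part. -/
theorem stmt_6 {Ω : Type*} [Fintype Ω] [DecidableEq Ω]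
    (C : Finset (Finset Ω))
    (hC3 : ∀ c ∈ C, c.card = 3)
    (heven : ∀ Q : Finset Ω, Q.card = 4 →
      Even (((Q.powersetCard 3).filter (· ∈ C)).card))
    (Γ : Finset Ω)
    (hinc : ∀ t ⊆ Γ, t.card = 3 → t ∉ C)
    (hmax : ∀ γ : Ω, γ ∉ Γ → ∃ α ∈ Γ, ∃ β ∈ Γ, ({γ, α, β} : Finset Ω) ∈ C)
    (γ : Ω) (hγ : γ ∉ Γ)
    (α₁ α₂ : Ω) (hα₁ : α₁ ∈ Γ) (hα₂ : α₂ ∈ Γ)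
    (hcoh : ({γ, α₁, α₂} : Finset Ω) ∈ C) :
    Disjoint (Γ.filter fun δ => ({γ, α₁, δ} : Finset Ω) ∈ C)
        (Γ.filter fun δ => ({γ, α₂, δ} : Finset Ω) ∈ C) ∧
    (Γ.filter fun δ => ({γ, α₁, δ} : Finset Ω) ∈ C) ∪
        (Γ.filter fun δ => ({γ, α₂, δ} : Finset Ω) ∈ C) = Γ ∧
    ∀ α ∈ Γ, ∀ β ∈ Γ, α ≠ β →
      (({γ, α, β} : Finset Ω) ∉ C ↔
        ((α ∈ Γ.filter fun δ => ({γ, α₁, δ} : Finset Ω) ∈ C) ∧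
          (β ∈ Γ.filter fun δ => ({γ, α₁, δ} : Finset Ω) ∈ C)) ∨
        ((α ∈ Γ.filter fun δ => ({γ, α₂, δ} : Finset Ω) ∈ C) ∧
          (β ∈ Γ.filter fun δ => ({γ, α₂, δ} : Finset Ω) ∈ C))) :=
  stmt_6_general C hC3 heven Γ hinc γ hγ α₁ α₂ hα₁ hα₂ hcoh
end

section
/- Let (Ω, C) be a regular two-graph with parameters (n, a, b) and let Γ ⊆ Ω be a maximal incoherent subset with |Γ| = g. Suppose there is a natural number g₁ such that for every γ ∈ Ω∖Γ and every α ∈ Γ, |Γ ∩ S_{γα}| = g₁ or |Γ ∩ S_{γα}| = g − g₁. If 2g₁ ≠ g, then for all distinct α, β ∈ Γ: 2(g − g₁) · #{γ ∈ Ω∖Γ : β ∉ S_{γα} and |Γ ∖ S_{γα}| = g₁} = a(g₁ − 1), and 2g₁ · #{γ ∈ Ω∖Γ : β ∉ S_{γα} and |Γ ∖ S_{γα}| = g − g₁} = a(g − g₁ − 1). If 2g₁ = g, then for all distinct α, β ∈ Γ: #{γ ∈ Ω∖Γ : β ∉ S_{γα}} = n − g − a. -/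
/-!
Fix `α ∈ Γ`. For `δ, ε ∈ Γ` the sets `S_{αδ}` lie outside `Γ` and have `a` elements, and the
parity condition on `{α, δ, ε, γ}`, where `{α, δ, ε}` is incoherent, gives
`S_{αδ} ∆ S_{αε} = S_{δε}`; hence `|S_{αδ} ∩ S_{αε}| = a / 2`. Double counting the size
`m γ = |Γ ∩ S_{γα}|` of the part of `Γ` not containing `α` then yields
`∑_{γ ∉ Γ} m = (g - 1) a`, `2 ∑_{γ ∉ Γ} m² = (g - 1) g a` and `2 ∑_{γ ∈ S_{αβ}} m = g a`.
If `m` only takes the values `g₁ ≠ g - g₁`, the first two identities fix how many `γ` of each kind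
there are, the third shows that each kind occurs `a / 2` times in `S_{αβ}`, and the counts follow
by subtraction. If `2 g₁ = g`, the count is `|Ω ∖ Γ| - |S_{αβ}|`.
-/

open Finset

open scoped symmDiff

theorem Finset.powersetCard_card_sub_one_eq_image_erase {α : Type*} [DecidableEq α]
    {s : Finset α} (hs : s.Nonempty) : s.powersetCard (#s - 1) = s.image s.erase := by
  ext t
  simp only [mem_powersetCard, mem_image]
  constructor
  · rintro ⟨hts, hcard⟩
    obtain ⟨u, hu⟩ : ∃ u, s \ t = {u} :=
      card_eq_one.mp (by rw [card_sdiff_of_subset hts]; have := hs.card_pos; omega)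
    refine ⟨u, (mem_sdiff.mp (hu ▸ mem_singleton_self u)).1, ?_⟩
    rw [← sdiff_singleton_eq_erase, ← hu, Finset.sdiff_sdiff_eq_self hts]
  · rintro ⟨u, hu, rfl⟩
    exact ⟨erase_subset u s, card_erase_of_mem hu⟩

section TwoValued

variable {ι : Type*} {D D' : Finset ι} {m : ι → ℕ} {p q : ℕ}

theorem sum_eq_card_filter_mul_add (hpq : p ≠ q) (hm : ∀ i ∈ D, m i = p ∨ m i = q)
    (f : ℕ → ℤ) :
    ∑ i ∈ D, f (m i) = #{i ∈ D | m i = p} * f p + #{i ∈ D | m i = q} * f q := by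
  have hconst (v : ℕ) : ∑ i ∈ D with m i = v, f (m i) = #{i ∈ D | m i = v} * f v := by
    rw [sum_eq_card_nsmul fun i hi => congrArg f (mem_filter.1 hi).2, nsmul_eq_mul]
  have hnot : {i ∈ D | ¬m i = p} = {i ∈ D | m i = q} :=
    filter_congr fun i hi => by rcases hm i hi with h | h <;> simp [h, hpq, Ne.symm hpq]
  rw [← sum_filter_add_sum_filter_not D (fun i => m i = p), hnot, hconst, hconst]

theorem two_mul_mul_card_filter_eq [DecidableEq ι] (hD' : D' ⊆ D) (hpq : p ≠ q)
    (hm : ∀ i ∈ D, m i = p ∨ m i = q) {g a : ℕ} (hg : p + q = g)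
    (h1 : ∑ i ∈ D, (m i : ℤ) = (g - 1) * a)
    (h2 : 2 * ∑ i ∈ D, (m i : ℤ) ^ 2 = (g - 1) * g * a)
    (h3 : 2 * ∑ i ∈ D', (m i : ℤ) = g * a) (h4 : #D' = a) :
    2 * (q : ℤ) * #{i ∈ D | i ∉ D' ∧ m i = q} = a * (p - 1) := by
  subst hg
  push_cast at h1 h2 h3
  have hm' : ∀ i ∈ D', m i = p ∨ m i = q := fun i hi => hm i (hD' hi)
  rw [sum_eq_card_filter_mul_add hpq hm (fun k => (k : ℤ))] at h1
  rw [sum_eq_card_filter_mul_add hpq hm (fun k => (k : ℤ) ^ 2)] at h2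
  rw [sum_eq_card_filter_mul_add hpq hm' (fun k => (k : ℤ))] at h3
  have hD'card := sum_eq_card_filter_mul_add hpq hm' (fun _ => (1 : ℤ))
  simp only [sum_const, h4, nsmul_eq_mul, mul_one] at hD'card
  have hsplit : #{i ∈ D | i ∉ D' ∧ m i = q} + #{i ∈ D' | m i = q} = #{i ∈ D | m i = q} := by
    rw [← card_filter_add_card_filter_not (s := {i ∈ D | m i = q}) (· ∉ D'), filter_filter,
      filter_filter]
    congr 2
    · ext i; simp [and_comm]
    · ext i; simp only [mem_filter, Decidable.not_not]; grind
  have hpq' : (p : ℤ) - q ≠ 0 := sub_ne_zero.2 (by exact_mod_cast hpq)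
  have hn : (p : ℤ) * #{i ∈ D | m i = p} = q * #{i ∈ D | m i = q} :=
    sub_eq_zero.1 <|
      (mul_eq_zero.1 (by linear_combination h2 - (p + q : ℤ) * h1)).resolve_left hpq'
  have hs : (#{i ∈ D' | m i = p} : ℤ) = #{i ∈ D' | m i = q} :=
    sub_eq_zero.1 <|
      (mul_eq_zero.1 (by linear_combination h3 + (p + q : ℤ) * hD'card)).resolve_left hpq'
  have hsplit' : (#{i ∈ D | i ∉ D' ∧ m i = q} : ℤ) + #{i ∈ D' | m i = q} =
      #{i ∈ D | m i = q} := by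
    exact_mod_cast hsplit
  linear_combination 2 * (q : ℤ) * hsplit' + h1 - hn + q * hD'card + q * hs

end TwoValued

section TwoGraph

variable {Ω : Type*} [DecidableEq Ω]

structure IsTwoGraph_s8 (C : Finset (Finset Ω)) : Prop where
  card_eq_three : ∀ c ∈ C, #c = 3
  even_card_coherent : ∀ Q : Finset Ω, #Q = 4 → Even #((Q.powersetCard 3).filter (· ∈ C))

def IsPairRegular (C : Finset (Finset Ω)) (a : ℕ) : Prop :=
  ∀ p : Finset Ω, #p = 2 → #(C.filter fun c => p ⊆ c) = a

def IsIncoherent (C : Finset (Finset Ω)) (Γ : Finset Ω) : Prop :=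
  ∀ t ⊆ Γ, #t = 3 → t ∉ C

namespace IsTwoGraph_s8

variable {C : Finset (Finset Ω)}

theorem even_card_filter_erase_mem (hC : IsTwoGraph_s8 C) {Q : Finset Ω} (hQ : #Q = 4) :
    Even #{u ∈ Q | Q.erase u ∈ C} := by
  have h := hC.even_card_coherent Q hQ
  rwa [show 3 = #Q - 1 by omega,
    powersetCard_card_sub_one_eq_image_erase (card_pos.1 (by omega)), filter_image,
    card_image_of_injOn ((erase_injOn Q).mono (filter_subset _ _))] at h

theorem mem_iff_xor (hC : IsTwoGraph_s8 C) {x y z w : Ω} (hxy : x ≠ y) (hxz : x ≠ z)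
    (hxw : x ≠ w) (hyz : y ≠ z) (hyw : y ≠ w) (hzw : z ≠ w) (hxyz : {x, y, z} ∉ C) :
    {y, z, w} ∈ C ↔ Xor ({x, y, w} ∈ C) ({x, z, w} ∈ C) := by
  have h := hC.even_card_filter_erase_mem (Q := {x, y, z, w}) (by simp [*])
  rw [card_filter, sum_insert (by simp [*]), sum_insert (by simp [*]), sum_insert (by simp [*]),
    sum_singleton] at h
  by_cases h1 : ({y, z, w} : Finset Ω) ∈ C <;> by_cases h2 : ({x, y, w} : Finset Ω) ∈ C <;>
    by_cases h3 : ({x, z, w} : Finset Ω) ∈ C <;> simp_all [erase_insert_of_ne, Nat.even_add_one]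

end IsTwoGraph_s8

section Sset

variable [Fintype Ω] {C : Finset (Finset Ω)} {Γ : Finset Ω} {a : ℕ} {α β γ δ ε : Ω}

@[simp] theorem mem_Sset_s8 : γ ∈ Sset C α β ↔ {α, β, γ} ∈ C := by
  simp [Sset]

theorem mem_Sset_comm : δ ∈ Sset C γ α ↔ γ ∈ Sset C α δ := by
  simp only [mem_Sset_s8, insert_comm γ, Finset.pair_comm γ]

theorem Sset_self (hC3 : ∀ c ∈ C, #c = 3) (α : Ω) : Sset C α α = ∅ := by
  ext γ
  simp only [mem_Sset_s8, insert_eq_of_mem (mem_insert_self α _), notMem_empty, iff_false]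
  intro h
  have := (hC3 _ h).symm.trans_le (card_le_two (a := α) (b := γ))
  omega

theorem card_Sset (hC3 : ∀ c ∈ C, #c = 3) (ha : IsPairRegular C a) (hαβ : α ≠ β) :
    #(Sset C α β) = a := by
  rw [← ha {α, β} (card_pair hαβ)]
  refine card_nbij (fun γ => {α, β, γ}) (fun γ hγ => ?_) (fun γ hγ γ' hγ' h => ?_) ?_
  · simp_all
  · have hγ3 := hC3 _ (mem_Sset_s8.1 hγ)
    have : γ ∈ ({α, β, γ'} : Finset Ω) := by
      rw [← show ({α, β, γ} : Finset Ω) = {α, β, γ'} from h]; simp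
    simp only [mem_insert, mem_singleton] at this
    rcases this with rfl | rfl | rfl <;> grind [card_le_two]
  · intro c hc
    obtain ⟨hcC, hαβc⟩ := mem_filter.1 hc
    obtain ⟨γ, hγc, hγ⟩ := exists_mem_notMem_of_card_lt_card
      ((card_pair hαβ).trans_lt (by rw [hC3 c hcC]; norm_num))
    have hsub : {α, β, γ} ⊆ c := by simp_all [insert_subset_iff]
    have hγ3 : #({α, β, γ} : Finset Ω) = 3 := by grind
    have := eq_of_subset_of_card_le hsub (by rw [hγ3, hC3 c hcC])
    exact ⟨γ, by simp_all, this⟩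

theorem notMem_of_mem_Sset (hC3 : ∀ c ∈ C, #c = 3) (hinc : IsIncoherent C Γ) (hα : α ∈ Γ)
    (hβ : β ∈ Γ) (hγ : γ ∈ Sset C α β) : γ ∉ Γ := fun hγΓ =>
  hinc _ (by simp [insert_subset_iff, *]) (hC3 _ (mem_Sset_s8.1 hγ)) (mem_Sset_s8.1 hγ)

theorem Sset_subset_compl (hC3 : ∀ c ∈ C, #c = 3) (hinc : IsIncoherent C Γ) (hα : α ∈ Γ)
    (hβ : β ∈ Γ) : Sset C α β ⊆ univ \ Γ := fun _ hγ =>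
  mem_sdiff.2 ⟨mem_univ _, notMem_of_mem_Sset hC3 hinc hα hβ hγ⟩

theorem symmDiff_Sset (hC : IsTwoGraph_s8 C) (hinc : IsIncoherent C Γ) (hα : α ∈ Γ) (hδ : δ ∈ Γ)
    (hε : ε ∈ Γ) (hαδ : α ≠ δ) (hαε : α ≠ ε) (hδε : δ ≠ ε) :
    Sset C α δ ∆ Sset C α ε = Sset C δ ε := by
  ext γ
  by_cases hγ : γ ∈ Γ
  · have hout {x y : Ω} (hx : x ∈ Γ) (hy : y ∈ Γ) : γ ∉ Sset C x y :=
      fun h => notMem_of_mem_Sset hC.card_eq_three hinc hx hy h hγ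
    simp [mem_symmDiff, hout hα hδ, hout hα hε, hout hδ hε]
  · have hne {x : Ω} (hx : x ∈ Γ) : x ≠ γ := by rintro rfl; exact hγ hx
    have hαδε : {α, δ, ε} ∉ C :=
      hinc _ (by simp [insert_subset_iff, *]) (card_eq_three.2 ⟨α, δ, ε, hαδ, hαε, hδε, rfl⟩)
    simp only [mem_symmDiff, mem_Sset_s8]
    exact (hC.mem_iff_xor hαδ hαε (hne hα) hδε (hne hδ) (hne hε) hαδε).symm

theorem two_mul_card_Sset_inter (hC : IsTwoGraph_s8 C) (hinc : IsIncoherent C Γ)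
    (ha : IsPairRegular C a) (hα : α ∈ Γ) (hδ : δ ∈ Γ) (hε : ε ∈ Γ) (hαδ : α ≠ δ) (hαε : α ≠ ε)
    (hδε : δ ≠ ε) : 2 * #(Sset C α δ ∩ Sset C α ε) = a := by
  have hunion := card_union_add_card_inter (Sset C α δ) (Sset C α ε)
  have hsymm : #(Sset C δ ε) + #(Sset C α δ ∩ Sset C α ε) = #(Sset C α δ ∪ Sset C α ε) := by
    rw [← symmDiff_Sset hC hinc hα hδ hε hαδ hαε hδε, symmDiff_eq_sup_sdiff_inf, sup_eq_union,
      inf_eq_inter, card_sdiff_add_card_eq_card inter_subset_union]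
  rw [card_Sset hC.card_eq_three ha hαδ, card_Sset hC.card_eq_three ha hαε] at hunion
  rw [card_Sset hC.card_eq_three ha hδε] at hsymm
  omega

theorem two_mul_card_Sset_inter_eq (hC : IsTwoGraph_s8 C) (hinc : IsIncoherent C Γ)
    (ha : IsPairRegular C a) (hα : α ∈ Γ) (hβ : β ∈ Γ) (hε : ε ∈ Γ) (hαβ : α ≠ β) :
    2 * (#(Sset C α β ∩ Sset C α ε) : ℤ) =
      a + (if ε = β then (a : ℤ) else 0) - (if ε = α then (a : ℤ) else 0) := by
  by_cases hεα : ε = α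
  · subst hεα
    simp [hαβ, Sset_self hC.card_eq_three]
  by_cases hεβ : ε = β
  · subst hεβ
    simp only [inter_self, card_Sset hC.card_eq_three ha hαβ, if_true, if_neg hεα, sub_zero]
    ring
  · simp only [hεα, hεβ, if_false, add_zero, sub_zero]
    exact_mod_cast two_mul_card_Sset_inter hC hinc ha hα hβ hε hαβ (Ne.symm hεα) (Ne.symm hεβ)

theorem sum_mul_card_inter_Sset (Γ E : Finset Ω) (α : Ω) (f : Ω → ℤ) :
    ∑ γ ∈ E, f γ * #(Γ ∩ Sset C γ α) = ∑ δ ∈ Γ, ∑ γ ∈ E ∩ Sset C α δ, f γ := by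
  calc ∑ γ ∈ E, f γ * #(Γ ∩ Sset C γ α)
      = ∑ γ ∈ E, ∑ δ ∈ Γ, if γ ∈ Sset C α δ then f γ else 0 := by
        refine sum_congr rfl fun γ _ => ?_
        rw [← filter_mem_eq_inter, card_filter, Nat.cast_sum, mul_sum]
        simp only [Nat.cast_ite, Nat.cast_one, Nat.cast_zero, mul_ite, mul_one, mul_zero,
          mem_Sset_comm]
    _ = ∑ δ ∈ Γ, ∑ γ ∈ E ∩ Sset C α δ, f γ := by
        rw [sum_comm]
        simp_rw [← sum_filter, filter_mem_eq_inter]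

theorem sum_card_inter_Sset (Γ E : Finset Ω) (α : Ω) :
    ∑ γ ∈ E, (#(Γ ∩ Sset C γ α) : ℤ) = ∑ δ ∈ Γ, (#(E ∩ Sset C α δ) : ℤ) := by
  simpa using sum_mul_card_inter_Sset Γ E α 1

theorem two_mul_sum_card_inter_Sset (hC : IsTwoGraph_s8 C) (hinc : IsIncoherent C Γ)
    (ha : IsPairRegular C a) (hα : α ∈ Γ) (hδ : δ ∈ Γ) :
    2 * ∑ γ ∈ Sset C α δ, (#(Γ ∩ Sset C γ α) : ℤ) = if δ = α then 0 else #Γ * a := by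
  split_ifs with hδα
  · simp [hδα, Sset_self hC.card_eq_three]
  rw [sum_card_inter_Sset, mul_sum,
    sum_congr rfl fun ε hε => two_mul_card_Sset_inter_eq hC hinc ha hα hδ hε (Ne.symm hδα)]
  simp [sum_add_distrib, sum_sub_distrib, hα, hδ]

theorem sum_card_inter_Sset_compl (hC3 : ∀ c ∈ C, #c = 3) (hinc : IsIncoherent C Γ)
    (ha : IsPairRegular C a) (hα : α ∈ Γ) :
    ∑ γ ∈ univ \ Γ, (#(Γ ∩ Sset C γ α) : ℤ) = (#Γ - 1) * a := by
  calc ∑ γ ∈ univ \ Γ, (#(Γ ∩ Sset C γ α) : ℤ)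
      = ∑ δ ∈ Γ, ((a : ℤ) - if δ = α then (a : ℤ) else 0) := by
        rw [sum_card_inter_Sset]
        refine sum_congr rfl fun δ hδ => ?_
        rw [inter_eq_right.2 (Sset_subset_compl hC3 hinc hα hδ)]
        split_ifs with hδα
        · simp [hδα, Sset_self hC3]
        · simp [card_Sset hC3 ha (Ne.symm hδα)]
    _ = (#Γ - 1) * a := by
        simp only [sum_sub_distrib, sum_const, nsmul_eq_mul, sum_ite_eq', if_pos hα]
        ring

theorem two_mul_sum_sq_card_inter_Sset_compl (hC : IsTwoGraph_s8 C) (hinc : IsIncoherent C Γ)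
    (ha : IsPairRegular C a) (hα : α ∈ Γ) :
    2 * ∑ γ ∈ univ \ Γ, (#(Γ ∩ Sset C γ α) : ℤ) ^ 2 = (#Γ - 1) * #Γ * a := by
  calc 2 * ∑ γ ∈ univ \ Γ, (#(Γ ∩ Sset C γ α) : ℤ) ^ 2
      = ∑ δ ∈ Γ, 2 * ∑ γ ∈ Sset C α δ, (#(Γ ∩ Sset C γ α) : ℤ) := by
        simp only [sq]
        rw [sum_mul_card_inter_Sset Γ (univ \ Γ) α (fun γ => (#(Γ ∩ Sset C γ α) : ℤ)), mul_sum]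
        refine sum_congr rfl fun δ hδ => ?_
        rw [inter_eq_right.2 (Sset_subset_compl hC.card_eq_three hinc hα hδ)]
    _ = ∑ δ ∈ Γ, ((#Γ * a : ℤ) - if δ = α then (#Γ * a : ℤ) else 0) := by
        refine sum_congr rfl fun δ hδ => ?_
        rw [two_mul_sum_card_inter_Sset hC hinc ha hα hδ]
        split_ifs <;> simp
    _ = (#Γ - 1) * #Γ * a := by
        simp only [sum_sub_distrib, sum_const, nsmul_eq_mul, sum_ite_eq', if_pos hα]
        ring

end Sset

section Partition

variable [Fintype Ω] {C : Finset (Finset Ω)} {Γ : Finset Ω} {a : ℕ} {α β : Ω}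

theorem two_mul_card_filter_part_eq (hC : IsTwoGraph_s8 C) (hinc : IsIncoherent C Γ)
    (ha : IsPairRegular C a) (hα : α ∈ Γ) (hβ : β ∈ Γ) (hαβ : α ≠ β) {p q : ℕ} (hpq : p ≠ q)
    (hg : p + q = #Γ)
    (hpart : ∀ γ ∉ Γ, #(Γ ∩ Sset C γ α) = p ∨ #(Γ ∩ Sset C γ α) = q) :
    2 * (q : ℤ) * #{γ ∈ univ \ Γ | β ∉ Sset C γ α ∧ #(Γ \ Sset C γ α) = p} = a * (p - 1) := by
  have hfilter : {γ ∈ univ \ Γ | β ∉ Sset C γ α ∧ #(Γ \ Sset C γ α) = p} =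
      {γ ∈ univ \ Γ | γ ∉ Sset C α β ∧ #(Γ ∩ Sset C γ α) = q} := by
    refine filter_congr fun γ _ => ?_
    have := card_sdiff_add_card_inter Γ (Sset C γ α)
    rw [mem_Sset_comm]
    exact and_congr_right fun _ => ⟨fun _ => by omega, fun _ => by omega⟩
  have hβsum := two_mul_sum_card_inter_Sset hC hinc ha hα hβ
  rw [if_neg (Ne.symm hαβ)] at hβsum
  rw [hfilter]
  exact two_mul_mul_card_filter_eq (Sset_subset_compl hC.card_eq_three hinc hα hβ) hpq
    (fun γ hγ => hpart γ (mem_sdiff.1 hγ).2) hg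
    (sum_card_inter_Sset_compl hC.card_eq_three hinc ha hα)
    (two_mul_sum_sq_card_inter_Sset_compl hC hinc ha hα) hβsum
    (card_Sset hC.card_eq_three ha hαβ)

theorem IsPairRegular.eq_zero_of_card_lt (ha : IsPairRegular C a) (hC3 : ∀ c ∈ C, #c = 3)
    (hinc : IsIncoherent C Γ) (hα : α ∈ Γ) (hβ : β ∈ Γ) (hαβ : α ≠ β) {g₁ : ℕ} (hlt : #Γ < g₁)
    (hpart : ∀ γ ∉ Γ, #(Γ ∩ Sset C γ α) = g₁ ∨ #(Γ ∩ Sset C γ α) = #Γ - g₁) : a = 0 := by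
  rw [← card_Sset hC3 ha hαβ, card_eq_zero, eq_empty_iff_forall_notMem]
  intro γ hγ
  have hβγ : β ∈ Γ ∩ Sset C γ α := mem_inter.2 ⟨hβ, mem_Sset_comm.2 hγ⟩
  have := card_pos.2 ⟨β, hβγ⟩
  have := card_le_card (inter_subset_left (s₁ := Γ) (s₂ := Sset C γ α))
  have := hpart γ (notMem_of_mem_Sset hC3 hinc hα hβ hγ)
  omega

theorem card_filter_notMem_Sset (hC3 : ∀ c ∈ C, #c = 3) (hinc : IsIncoherent C Γ)
    (ha : IsPairRegular C a) (hα : α ∈ Γ) (hβ : β ∈ Γ) (hαβ : α ≠ β) :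
    (#{γ ∈ univ \ Γ | β ∉ Sset C γ α} : ℤ) = Fintype.card Ω - #Γ - a := by
  have hfilter : {γ ∈ univ \ Γ | β ∉ Sset C γ α} = (univ \ Γ) \ Sset C α β := by
    ext γ
    simp only [mem_filter, mem_sdiff, mem_Sset_comm (δ := β)]
  have hsub := Sset_subset_compl hC3 hinc hα hβ
  rw [hfilter, card_sdiff_of_subset hsub, Nat.cast_sub (card_le_card hsub), card_univ_sdiff,
    Nat.cast_sub (card_le_univ Γ), card_Sset hC3 ha hαβ]

end Partition

end TwoGraph

theorem stmt_8_general {Ω : Type*} [Fintype Ω] [DecidableEq Ω]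
    (C : Finset (Finset Ω)) (n a : ℕ)
    (hC3 : ∀ c ∈ C, c.card = 3)
    (heven : ∀ Q : Finset Ω, Q.card = 4 →
      Even (((Q.powersetCard 3).filter (· ∈ C)).card))
    (hn : Fintype.card Ω = n)
    (ha : ∀ p : Finset Ω, p.card = 2 → (C.filter fun c => p ⊆ c).card = a)
    (Γ : Finset Ω) (g : ℕ) (hg : Γ.card = g)
    (hinc : ∀ t ⊆ Γ, t.card = 3 → t ∉ C)
    (g₁ : ℕ)
    (hpart : ∀ γ : Ω, γ ∉ Γ → ∀ α ∈ Γ,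
      (Γ ∩ Sset C γ α).card = g₁ ∨ (Γ ∩ Sset C γ α).card = g - g₁) :
    (2 * g₁ ≠ g →
      ∀ α ∈ Γ, ∀ β ∈ Γ, α ≠ β →
        2 * ((g : ℤ) - g₁) *
            (((univ \ Γ).filter fun γ =>
              β ∉ Sset C γ α ∧ (Γ \ Sset C γ α).card = g₁).card : ℤ)
          = a * ((g₁ : ℤ) - 1) ∧
        2 * (g₁ : ℤ) *
            (((univ \ Γ).filter fun γ =>
              β ∉ Sset C γ α ∧ (Γ \ Sset C γ α).card = g - g₁).card : ℤ)
          = a * ((g : ℤ) - g₁ - 1)) ∧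
    (2 * g₁ = g →
      ∀ α ∈ Γ, ∀ β ∈ Γ, α ≠ β →
        (((univ \ Γ).filter fun γ => β ∉ Sset C γ α).card : ℤ)
          = (n : ℤ) - g - a) := by
  have hC : IsTwoGraph_s8 C := ⟨hC3, heven⟩
  subst hn hg
  refine ⟨fun hg₁ α hα β hβ hαβ => ?_,
    fun _ α hα β hβ hαβ => card_filter_notMem_Sset hC3 hinc ha hα hβ hαβ⟩
  have hpartα γ (hγ : γ ∉ Γ) := hpart γ hγ α hα
  by_cases hle : g₁ ≤ #Γ
  · have hsum : g₁ + (#Γ - g₁) = #Γ := by omega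
    constructor
    · simpa [Nat.cast_sub hle] using two_mul_card_filter_part_eq hC hinc ha hα hβ hαβ
        (by omega) hsum hpartα
    · simpa [Nat.cast_sub hle, sub_sub] using two_mul_card_filter_part_eq hC hinc ha hα hβ hαβ
        (by omega) (by omega) fun γ hγ => (hpartα γ hγ).symm
  -- `#Γ < g₁` forces `#Γ - g₁ = 0` in `ℕ`: every `Γ ∩ S_{γα}` is empty, `a = 0`, and both
  -- counted sets are empty.
  · have ha0 := IsPairRegular.eq_zero_of_card_lt ha hC3 hinc hα hβ hαβ (not_le.1 hle) hpartα
    have hX γ : #(Γ \ Sset C γ α) ≠ g₁ := ((card_le_card sdiff_subset).trans_lt (not_le.1 hle)).ne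
    have hY γ : #(Γ \ Sset C γ α) ≠ #Γ - g₁ := by
      have hαS : α ∉ Sset C γ α := by rw [mem_Sset_comm, Sset_self hC3]; exact notMem_empty γ
      have := card_pos.2 ⟨α, mem_sdiff.2 ⟨hα, hαS⟩⟩
      omega
    simp [ha0, hX, hY]

/-- **Theorem 4.9 (Gillespie).** If every element `γ ∉ Γ` induces a partition of the maximal
incoherent set `Γ` into parts of sizes `g₁` and `g - g₁`, then the parts form 2-designs on
`Γ` (with the stated replication counts). -/
theorem stmt_8 {Ω : Type*} [Fintype Ω] [DecidableEq Ω]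
    (C : Finset (Finset Ω)) (n a b : ℕ)
    (hC3 : ∀ c ∈ C, c.card = 3)
    (heven : ∀ Q : Finset Ω, Q.card = 4 →
      Even (((Q.powersetCard 3).filter (· ∈ C)).card))
    (hn : Fintype.card Ω = n)
    (ha : ∀ p : Finset Ω, p.card = 2 → (C.filter fun c => p ⊆ c).card = a)
    (hb : ∀ c ∈ C, (((univ : Finset Ω).powersetCard 4).filter
      (fun Q => c ⊆ Q ∧ ∀ t ∈ Q.powersetCard 3, t ∈ C)).card = b)
    (Γ : Finset Ω) (g : ℕ) (hg : Γ.card = g)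
    (hinc : ∀ t ⊆ Γ, t.card = 3 → t ∉ C)
    (hmax : ∀ γ : Ω, γ ∉ Γ → ∃ α ∈ Γ, ∃ β ∈ Γ, ({γ, α, β} : Finset Ω) ∈ C)
    (g₁ : ℕ)
    (hpart : ∀ γ : Ω, γ ∉ Γ → ∀ α ∈ Γ,
      (Γ ∩ Sset C γ α).card = g₁ ∨ (Γ ∩ Sset C γ α).card = g - g₁) :
    (2 * g₁ ≠ g →
      ∀ α ∈ Γ, ∀ β ∈ Γ, α ≠ β →
        2 * ((g : ℤ) - g₁) *
            (((univ \ Γ).filter fun γ =>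
              β ∉ Sset C γ α ∧ (Γ \ Sset C γ α).card = g₁).card : ℤ)
          = a * ((g₁ : ℤ) - 1) ∧
        2 * (g₁ : ℤ) *
            (((univ \ Γ).filter fun γ =>
              β ∉ Sset C γ α ∧ (Γ \ Sset C γ α).card = g - g₁).card : ℤ)
          = a * ((g : ℤ) - g₁ - 1)) ∧
    (2 * g₁ = g →
      ∀ α ∈ Γ, ∀ β ∈ Γ, α ≠ β →
        (((univ \ Γ).filter fun γ => β ∉ Sset C γ α).card : ℤ)
          = (n : ℤ) - g - a) :=
  stmt_8_general C n a hC3 heven hn ha Γ g hg hinc g₁ hpart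
end

section
/- Let d, k, s₁, s₂ be natural numbers with 0 ≤ s₂ < s₁ < k ≤ d, let P be a set of d points (identified with Fin d), and let 𝓑 be a finite set of k-element subsets of P such that any two distinct members of 𝓑 intersect in exactly s₁ or exactly s₂ points. Assume Δ₁ := k² − d(s₁+s₂)/2 ≥ 0 (as a real number), and for each B ∈ 𝓑 define v(B) ∈ EuclideanSpace ℝ (Fin d) by v(B)_j = (d − k) + √Δ₁ if j ∈ B and v(B)_j = −k + √Δ₁ if j ∉ B. Then ⟪v(B), v(B)⟫ = d²(2k − s₁ − s₂)/2 for every B ∈ 𝓑, and for distinct B₁, B₂ ∈ 𝓑, ⟪v(B₁), v(B₂)⟫ = d²(s₁−s₂)/2 if |B₁ ∩ B₂| = s₁ and ⟪v(B₁), v(B₂)⟫ = −d²(s₁−s₂)/2 if |B₁ ∩ B₂| = s₂. Consequently the vectors v(B) span |𝓑| distinct equiangular lines in ℝ^d with common angle κ = (s₁−s₂)/(2k − s₁ − s₂). -/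
open scoped RealInnerProductSpace
open Finset

/-!
Write `r = √Δ₁`. Each `v(B) = (r - k) • 𝟙 + d • 𝟙_B` is a constant vector plus a multiple of an
indicator, so `⟪v(B₁), v(B₂)⟫ = d (r - k)² + 2 k d (r - k) + d² |B₁ ∩ B₂|`, and `r² = Δ₁` turns this
into `d² (2 |B₁ ∩ B₂| - s₁ - s₂) / 2`. All vectors thus have squared norm `d² (2k - s₁ - s₂) / 2`
while distinct ones have inner product `± d² (s₁ - s₂) / 2`, which is strictly smaller in absolute
value because `s₁ < k`; by the equality case of Cauchy–Schwarz no two of them are parallel.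
-/

def blockVector {ι : Type*} [DecidableEq ι] (B : Finset ι) (a b : ℝ) : EuclideanSpace ℝ ι :=
  WithLp.toLp 2 fun j => if j ∈ B then a else b

theorem inner_blockVector {ι : Type*} [Fintype ι] [DecidableEq ι] (A B : Finset ι) (a b : ℝ) :
    ⟪blockVector A a b, blockVector B a b⟫ =
      Fintype.card ι * b ^ 2 + (a - b) * b * (#A + #B) + (a - b) ^ 2 * #(A ∩ B) := by
  have hterm : ∀ j, (if j ∈ B then a else b) * (if j ∈ A then a else b) =
      b ^ 2 + ((if j ∈ A then (a - b) * b else 0) + (if j ∈ B then (a - b) * b else 0)) +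
        (if j ∈ A ∩ B then (a - b) ^ 2 else 0) := by
    intro j
    by_cases hA : j ∈ A <;> by_cases hB : j ∈ B <;> simp [hA, hB] <;> ring
  simp only [blockVector, PiLp.inner_apply, RCLike.inner_apply, conj_trivial, hterm,
    sum_add_distrib, sum_ite_mem, univ_inter, sum_const, card_univ, nsmul_eq_mul]
  ring

theorem inner_blockVector_of_card_eq {d k : ℕ} {s r : ℝ} (hr : r ^ 2 = (k : ℝ) ^ 2 - d * s / 2)
    {A B : Finset (Fin d)} (hA : #A = k) (hB : #B = k) :
    ⟪blockVector A (d - k + r) (-k + r), blockVector B (d - k + r) (-k + r)⟫ =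
      (d : ℝ) ^ 2 * (2 * #(A ∩ B) - s) / 2 := by
  rw [inner_blockVector, hA, hB, Fintype.card_fin]
  linear_combination (d : ℝ) * hr

section

variable {F : Type*} [NormedAddCommGroup F] [InnerProductSpace ℝ F] {u w : F}

theorem norm_mul_norm_eq_of_real_inner_self_eq {N : ℝ} (hu : ⟪u, u⟫ = N) (hw : ⟪w, w⟫ = N) :
    ‖u‖ * ‖w‖ = N := by
  rw [real_inner_self_eq_norm_sq] at hu hw
  rw [(sq_eq_sq₀ (norm_nonneg u) (norm_nonneg w)).1 (hu.trans hw.symm), ← sq, hw]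

theorem ne_smul_of_abs_real_inner_lt (h : |⟪u, w⟫| < ‖u‖ * ‖w‖) (t : ℝ) : u ≠ t • w := by
  rintro rfl
  rw [real_inner_smul_self_left, norm_smul, Real.norm_eq_abs, abs_mul,
    abs_of_nonneg (mul_self_nonneg ‖w‖), mul_assoc] at h
  exact lt_irrefl _ h

end

/-- **Theorem 6.2 (Gillespie).** From a `(d, k; s₁, s₂)` block set with
`Δ₁ = k² - d(s₁+s₂)/2 ≥ 0` one constructs vectors `v(B)` spanning `|𝓑|` distinct
equiangular lines in `ℝ^d` with common angle `κ = (s₁-s₂)/(2k-s₁-s₂)`. -/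
theorem stmt_10 (d k s₁ s₂ : ℕ) (hs₂s₁ : s₂ < s₁) (hs₁k : s₁ < k) (hkd : k ≤ d)
    (𝓑 : Finset (Finset (Fin d)))
    (hcard : ∀ B ∈ 𝓑, B.card = k)
    (hint : ∀ B₁ ∈ 𝓑, ∀ B₂ ∈ 𝓑, B₁ ≠ B₂ →
      (B₁ ∩ B₂).card = s₁ ∨ (B₁ ∩ B₂).card = s₂)
    (hΔ : 0 ≤ (k : ℝ) ^ 2 - d * (s₁ + s₂) / 2)
    (v : Finset (Fin d) → EuclideanSpace ℝ (Fin d))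
    (hv : ∀ B ∈ 𝓑, ∀ j : Fin d,
      v B j = if j ∈ B then ((d : ℝ) - k) + Real.sqrt ((k : ℝ) ^ 2 - d * (s₁ + s₂) / 2)
        else -(k : ℝ) + Real.sqrt ((k : ℝ) ^ 2 - d * (s₁ + s₂) / 2)) :
    (∀ B ∈ 𝓑, ⟪v B, v B⟫ = (d : ℝ) ^ 2 * (2 * k - s₁ - s₂) / 2) ∧
    (∀ B₁ ∈ 𝓑, ∀ B₂ ∈ 𝓑, B₁ ≠ B₂ →
      ((B₁ ∩ B₂).card = s₁ → ⟪v B₁, v B₂⟫ = (d : ℝ) ^ 2 * ((s₁ : ℝ) - s₂) / 2) ∧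
      ((B₁ ∩ B₂).card = s₂ → ⟪v B₁, v B₂⟫ = -((d : ℝ) ^ 2 * ((s₁ : ℝ) - s₂) / 2))) ∧
    (∀ B₁ ∈ 𝓑, ∀ B₂ ∈ 𝓑, B₁ ≠ B₂ →
      |⟪v B₁, v B₂⟫| =
        (((s₁ : ℝ) - s₂) / (2 * k - s₁ - s₂)) * ‖v B₁‖ * ‖v B₂‖) ∧
    (∀ B₁ ∈ 𝓑, ∀ B₂ ∈ 𝓑, B₁ ≠ B₂ → ∀ t : ℝ, v B₁ ≠ t • v B₂) := by
  set r := Real.sqrt ((k : ℝ) ^ 2 - d * (s₁ + s₂) / 2)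
  have hs₂s₁' : (s₂ : ℝ) < s₁ := by exact_mod_cast hs₂s₁
  have hs₁k' : (s₁ : ℝ) < k := by exact_mod_cast hs₁k
  have hd : (0 : ℝ) < d := Nat.cast_pos.mpr (by omega)
  have hv_eq : ∀ B ∈ 𝓑, v B = blockVector B (d - k + r) (-k + r) := fun B hB => by
    ext j
    simp [blockVector, hv B hB j, r]
  have hinner : ∀ A ∈ 𝓑, ∀ B ∈ 𝓑, ⟪v A, v B⟫ = (d : ℝ) ^ 2 * (2 * #(A ∩ B) - (s₁ + s₂)) / 2 :=
    fun A hA B hB => by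
      rw [hv_eq A hA, hv_eq B hB]
      exact inner_blockVector_of_card_eq (Real.sq_sqrt hΔ) (hcard A hA) (hcard B hB)
  have hself : ∀ B ∈ 𝓑, ⟪v B, v B⟫ = (d : ℝ) ^ 2 * (2 * k - s₁ - s₂) / 2 := fun B hB => by
    rw [hinner B hB B hB, inter_self, hcard B hB]
    ring
  have hcross : ∀ A ∈ 𝓑, ∀ B ∈ 𝓑, A ≠ B →
      (#(A ∩ B) = s₁ → ⟪v A, v B⟫ = (d : ℝ) ^ 2 * ((s₁ : ℝ) - s₂) / 2) ∧
      (#(A ∩ B) = s₂ → ⟪v A, v B⟫ = -((d : ℝ) ^ 2 * ((s₁ : ℝ) - s₂) / 2)) := by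
    intro A hA B hB _
    constructor <;> intro hm <;> rw [hinner A hA B hB, hm] <;> ring
  have habs : ∀ A ∈ 𝓑, ∀ B ∈ 𝓑, A ≠ B → |⟪v A, v B⟫| = (d : ℝ) ^ 2 * ((s₁ : ℝ) - s₂) / 2 := by
    intro A hA B hB hAB
    have hpos : 0 ≤ (d : ℝ) ^ 2 * ((s₁ : ℝ) - s₂) / 2 := by nlinarith
    rcases hint A hA B hB hAB with hm | hm
    · rw [(hcross A hA B hB hAB).1 hm, abs_of_nonneg hpos]
    · rw [(hcross A hA B hB hAB).2 hm, abs_neg, abs_of_nonneg hpos]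
  have hnorm : ∀ A ∈ 𝓑, ∀ B ∈ 𝓑, ‖v A‖ * ‖v B‖ = (d : ℝ) ^ 2 * (2 * k - s₁ - s₂) / 2 :=
    fun A hA B hB => norm_mul_norm_eq_of_real_inner_self_eq (hself A hA) (hself B hB)
  refine ⟨hself, hcross, fun A hA B hB hAB => ?_, fun A hA B hB hAB => ?_⟩
  · have hden : (2 * k - s₁ - s₂ : ℝ) ≠ 0 := by linarith
    rw [habs A hA B hB hAB, mul_assoc, hnorm A hA B hB]
    field_simp
  · refine ne_smul_of_abs_real_inner_lt ?_
    rw [habs A hA B hB hAB, hnorm A hA B hB]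
    gcongr
    linarith
end

section
/- Let m ≥ 1 and s₂ ≥ 0 be integers, set s₁ = s₂ + m and k = m² + s₁, and assume s₁ divides (m² + m + s₁)²; set d = (m² + m + s₁)²/s₁ − 2m. Let P be a set of d points (identified with Fin d) and 𝓑 a finite set of k-element subsets of P such that any two distinct members intersect in exactly s₁ or exactly s₂ points. Define Δ = √(m/(2s₁)) · (m² − s₂) and Δ₂ = m(2m + d)/2, and define vectors in EuclideanSpace ℝ (Fin d): for B ∈ 𝓑, v(B)_j = (d − k) + Δ if j ∈ B and v(B)_j = −k + Δ if j ∉ B; for i ∈ P, v(i)_j = m(d−1) − √Δ₂ if j = i and v(i)_j = −m − √Δ₂ if j ≠ i. Then every one of these |𝓑| + d vectors has squared norm d²m(2m+1)/2; for distinct B₁, B₂ ∈ 𝓑, ⟪v(B₁), v(B₂)⟫ = d²m/2 if |B₁∩B₂| = s₁ and −d²m/2 if |B₁∩B₂| = s₂; for distinct i, j ∈ P, ⟪v(i), v(j)⟫ = d²m/2; and for B ∈ 𝓑, i ∈ P, ⟪v(B), v(i)⟫ = d²m/2 if i ∈ B and −d²m/2 if i ∉ B. Consequently the normalized vectors form an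 equiangular family in ℝ^d with common angle 1/(2m+1), in which {v(i) : i ∈ P} is an incoherent subset of size d. -/
open scoped RealInnerProductSpace
open Finset

/-!
Every vector of the construction takes one value on a set (a block, or a single point) and
another value off it, so each inner product is a polynomial in `d`, `k`, `|B ∩ C|` and the
two shifts `Δ`, `√Δ₂`. Since `s₁ (d + 2m) = (m² + m + s₁)²`, the shifts
satisfy `Δ² = k² - d (s₁ + s₂) / 2` and `Δ √Δ₂ = m (d - 2k) / 2`, and with these identities
every inner product collapses to `± d² m / 2` and every squared norm to `2m + 1` times that.
-/

lemma mul_div_sub_add_eq_sq {s a c : ℕ} (hs : 0 < s) (hsa : s ≤ a) (hca : c ≤ a)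
    (hdvd : s ∣ a ^ 2) : s * (a ^ 2 / s - c + c) = a ^ 2 := by
  have ha : a ≤ a ^ 2 / s := (Nat.le_div_iff_mul_le hs).2 (by nlinarith)
  rw [Nat.sub_add_cancel (hca.trans ha), Nat.mul_div_cancel' hdvd]

lemma abs_real_inner_eq_mul_norm_mul_norm {E : Type*} [NormedAddCommGroup E]
    [InnerProductSpace ℝ E] {x y : E} {N a c : ℝ} (hx : ⟪x, x⟫ = N) (hy : ⟪y, y⟫ = N)
    (hxy : ⟪x, y⟫ = a ∨ ⟪x, y⟫ = -a) (ha : 0 ≤ a) (hcN : c * N = a) :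
    |⟪x, y⟫| = c * ‖x‖ * ‖y‖ := by
  rw [mul_assoc, norm_eq_sqrt_real_inner x, norm_eq_sqrt_real_inner y, hx, hy,
    Real.mul_self_sqrt (hx ▸ real_inner_self_nonneg), hcN, abs_eq ha]
  exact hxy

lemma real_inner_eq_of_eq_ite {ι : Type*} [Fintype ι] [DecidableEq ι]
    {x y : EuclideanSpace ℝ ι} {B C : Finset ι} {a b a' b' : ℝ}
    (hx : ∀ j, x j = if j ∈ B then a else b) (hy : ∀ j, y j = if j ∈ C then a' else b') :
    ⟪x, y⟫ = Fintype.card ι * (b * b') + (a - b) * b' * #B + (a' - b') * b * #C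
      + (a - b) * (a' - b') * #(B ∩ C) := by
  have hxy : ∀ j, x j * y j = b * b' + (a - b) * b' * (if j ∈ B then 1 else 0)
      + (a' - b') * b * (if j ∈ C then 1 else 0)
      + (a - b) * (a' - b') * (if j ∈ B ∩ C then 1 else 0) := by
    intro j
    by_cases hB : j ∈ B <;> by_cases hC : j ∈ C <;> simp [hx, hy, hB, hC] <;> ring
  simp only [PiLp.inner_apply, RCLike.inner_apply, conj_trivial, mul_comm (y _), hxy,
    sum_add_distrib, ← sum_mul, ← mul_sum, sum_boole, filter_mem_eq_inter, univ_inter,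
    sum_const, card_univ, nsmul_eq_mul]
  ring

/-- The parameters over `ℝ`, with the definition of `d` by division replaced by the identity
`s₁ (d + 2m) = (m² + m + s₁)²` that it implies. -/
structure GillespieParams (m s₁ s₂ d k : ℝ) : Prop where
  nonneg : 0 ≤ m
  pos : 0 < s₁
  s₁_eq : s₁ = s₂ + m
  k_eq : k = m ^ 2 + s₁
  mul_eq_sq : s₁ * (d + 2 * m) = (m ^ 2 + m + s₁) ^ 2

lemma GillespieParams.of_nat {m s₂ s₁ k d : ℕ} (hs : 0 < s₁) (hs₁ : s₁ = s₂ + m)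
    (hk : k = m ^ 2 + s₁) (hdvd : s₁ ∣ (m ^ 2 + m + s₁) ^ 2)
    (hd : d = (m ^ 2 + m + s₁) ^ 2 / s₁ - 2 * m) : GillespieParams m s₁ s₂ d k := by
  have hd' : s₁ * (d + 2 * m) = (m ^ 2 + m + s₁) ^ 2 :=
    hd ▸ mul_div_sub_add_eq_sq hs (by omega) (by nlinarith [Nat.le_self_pow two_ne_zero m]) hdvd
  exact ⟨by positivity, by exact_mod_cast hs, by exact_mod_cast hs₁, by exact_mod_cast hk,
    by exact_mod_cast hd'⟩

/-- The shift `Δ` of the block vectors. -/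
noncomputable def blockShift (m s₁ s₂ : ℝ) : ℝ := √(m / (2 * s₁)) * (m ^ 2 - s₂)

/-- The shift `√Δ₂` of the point vectors. -/
noncomputable def pointShift (m d : ℝ) : ℝ := √(m * (2 * m + d) / 2)

lemma pointShift_sq {m d : ℝ} (hm : 0 ≤ m) (hd : 0 ≤ d) :
    pointShift m d ^ 2 = m * (2 * m + d) / 2 :=
  Real.sq_sqrt (by positivity)

namespace GillespieParams

variable {m s₁ s₂ d k : ℝ}

lemma blockShift_sq (hp : GillespieParams m s₁ s₂ d k) :
    blockShift m s₁ s₂ ^ 2 = k ^ 2 - d * (s₁ + s₂) / 2 := by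
  obtain ⟨hm, hs, hs₁, rfl, hd⟩ := hp
  have key : m * (m ^ 2 - s₂) ^ 2 = 2 * s₁ * ((m ^ 2 + s₁) ^ 2 - d * (s₁ + s₂) / 2) := by
    subst hs₁
    linear_combination (2 * s₂ + m) * hd
  rw [blockShift, mul_pow, Real.sq_sqrt (by positivity), div_mul_eq_mul_div,
    div_eq_iff (by positivity), key]
  ring

lemma blockShift_mul_pointShift (hp : GillespieParams m s₁ s₂ d k) :
    blockShift m s₁ s₂ * pointShift m d = m * (d - 2 * k) / 2 := by
  obtain ⟨hm, hs, hs₁, rfl, hd⟩ := hp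
  have hprod :
      m / (2 * s₁) * (m * (2 * m + d) / 2) = (m * (m ^ 2 + m + s₁) / (2 * s₁)) ^ 2 := by
    field_simp
    linear_combination (m ^ 2) * hd
  have key : (m ^ 2 - s₂) * (m * (m ^ 2 + m + s₁)) = s₁ * (m * (d - 2 * (m ^ 2 + s₁))) := by
    subst hs₁
    linear_combination (-m) * hd
  rw [blockShift, pointShift, mul_right_comm, ← Real.sqrt_mul (by positivity), hprod,
    Real.sqrt_sq (by positivity), div_mul_eq_mul_div, mul_comm _ (m ^ 2 - s₂), key]
  field_simp

end GillespieParams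

section Gram

variable {n k : ℕ} {m s₁ s₂ : ℝ} {x y : EuclideanSpace ℝ (Fin n)} {B C : Finset (Fin n)}
  {i j : Fin n}

lemma eq_ite_mem_singleton {a b : ℝ} (hx : ∀ l, x l = if l = i then a else b) :
    ∀ l, x l = if l ∈ ({i} : Finset (Fin n)) then a else b := by
  simpa only [mem_singleton] using hx

lemma GillespieParams.inner_blockVectors (hp : GillespieParams m s₁ s₂ n k)
    (hx : ∀ l, x l = if l ∈ B then ((n : ℝ) - k) + blockShift m s₁ s₂
      else -(k : ℝ) + blockShift m s₁ s₂)
    (hy : ∀ l, y l = if l ∈ C then ((n : ℝ) - k) + blockShift m s₁ s₂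
      else -(k : ℝ) + blockShift m s₁ s₂)
    (hB : #B = k) (hC : #C = k) :
    ⟪x, y⟫ = n ^ 2 * (#(B ∩ C) - (s₁ + s₂) / 2) := by
  rw [real_inner_eq_of_eq_ite hx hy, hB, hC, Fintype.card_fin]
  linear_combination (n : ℝ) * hp.blockShift_sq

lemma inner_pointVectors (hm : 0 ≤ m)
    (hx : ∀ l, x l = if l = i then m * ((n : ℝ) - 1) - pointShift m n else -m - pointShift m n)
    (hy : ∀ l, y l = if l = j then m * ((n : ℝ) - 1) - pointShift m n else -m - pointShift m n) :
    ⟪x, y⟫ = if i = j then (n : ℝ) ^ 2 * m * (2 * m + 1) / 2 else (n : ℝ) ^ 2 * m / 2 := by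
  rw [real_inner_eq_of_eq_ite (eq_ite_mem_singleton hx) (eq_ite_mem_singleton hy),
    Fintype.card_fin, card_singleton, card_singleton, singleton_inter]
  by_cases hij : i = j <;>
    simp only [hij, mem_singleton, if_true, if_false, card_singleton, card_empty] <;>
    push_cast <;> linear_combination (n : ℝ) * pointShift_sq hm (Nat.cast_nonneg n)

lemma GillespieParams.inner_blockVector_pointVector (hp : GillespieParams m s₁ s₂ n k)
    (hx : ∀ l, x l = if l ∈ B then ((n : ℝ) - k) + blockShift m s₁ s₂
      else -(k : ℝ) + blockShift m s₁ s₂)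
    (hB : #B = k)
    (hy : ∀ l, y l = if l = i then m * ((n : ℝ) - 1) - pointShift m n else -m - pointShift m n) :
    ⟪x, y⟫ = if i ∈ B then (n : ℝ) ^ 2 * m / 2 else -((n : ℝ) ^ 2 * m / 2) := by
  rw [real_inner_eq_of_eq_ite hx (eq_ite_mem_singleton hy), Fintype.card_fin, hB,
    card_singleton, inter_singleton]
  by_cases hiB : i ∈ B <;> simp only [hiB, if_true, if_false, card_singleton, card_empty] <;>
    push_cast <;> linear_combination (-(n : ℝ)) * hp.blockShift_mul_pointShift

end Gram

/-- **Theorem 6.7 (Gillespie).** Given a `(d, k; s₁, s₂)` block set with `s₁ = s₂ + m`,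
`k = m² + s₁` and `d = (m² + m + s₁)²/s₁ - 2m`, the vectors `v(B)` (for blocks `B`)
together with `d` further vectors `w(i)` (for points `i`) span equiangular lines in `ℝ^d`
with common angle `1/(2m+1)`, in which the `w(i)` form an incoherent subset of size `d`. -/
theorem stmt_11 (m s₂ : ℕ) (hm : 1 ≤ m) (s₁ k d : ℕ)
    (hs₁ : s₁ = s₂ + m) (hk : k = m ^ 2 + s₁)
    (hdvd : s₁ ∣ (m ^ 2 + m + s₁) ^ 2)
    (hd : d = (m ^ 2 + m + s₁) ^ 2 / s₁ - 2 * m)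
    (𝓑 : Finset (Finset (Fin d)))
    (hcard : ∀ B ∈ 𝓑, B.card = k)
    (hint : ∀ B₁ ∈ 𝓑, ∀ B₂ ∈ 𝓑, B₁ ≠ B₂ →
      (B₁ ∩ B₂).card = s₁ ∨ (B₁ ∩ B₂).card = s₂)
    (v : Finset (Fin d) → EuclideanSpace ℝ (Fin d))
    (hv : ∀ B ∈ 𝓑, ∀ j : Fin d,
      v B j = if j ∈ B
        then ((d : ℝ) - k) + Real.sqrt ((m : ℝ) / (2 * s₁)) * ((m : ℝ) ^ 2 - s₂)
        else -(k : ℝ) + Real.sqrt ((m : ℝ) / (2 * s₁)) * ((m : ℝ) ^ 2 - s₂))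
    (w : Fin d → EuclideanSpace ℝ (Fin d))
    (hw : ∀ i j : Fin d,
      w i j = if j = i
        then (m : ℝ) * ((d : ℝ) - 1) - Real.sqrt ((m : ℝ) * (2 * m + d) / 2)
        else -(m : ℝ) - Real.sqrt ((m : ℝ) * (2 * m + d) / 2)) :
    (∀ B ∈ 𝓑, ⟪v B, v B⟫ = (d : ℝ) ^ 2 * m * (2 * m + 1) / 2) ∧
    (∀ i : Fin d, ⟪w i, w i⟫ = (d : ℝ) ^ 2 * m * (2 * m + 1) / 2) ∧
    (∀ B₁ ∈ 𝓑, ∀ B₂ ∈ 𝓑, B₁ ≠ B₂ →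
      ((B₁ ∩ B₂).card = s₁ → ⟪v B₁, v B₂⟫ = (d : ℝ) ^ 2 * m / 2) ∧
      ((B₁ ∩ B₂).card = s₂ → ⟪v B₁, v B₂⟫ = -((d : ℝ) ^ 2 * m / 2))) ∧
    (∀ i j : Fin d, i ≠ j → ⟪w i, w j⟫ = (d : ℝ) ^ 2 * m / 2) ∧
    (∀ B ∈ 𝓑, ∀ i : Fin d,
      (i ∈ B → ⟪v B, w i⟫ = (d : ℝ) ^ 2 * m / 2) ∧
      (i ∉ B → ⟪v B, w i⟫ = -((d : ℝ) ^ 2 * m / 2))) ∧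
    (∀ B₁ ∈ 𝓑, ∀ B₂ ∈ 𝓑, B₁ ≠ B₂ →
      |⟪v B₁, v B₂⟫| = (1 / (2 * (m : ℝ) + 1)) * ‖v B₁‖ * ‖v B₂‖) ∧
    (∀ i j : Fin d, i ≠ j →
      |⟪w i, w j⟫| = (1 / (2 * (m : ℝ) + 1)) * ‖w i‖ * ‖w j‖) ∧
    (∀ B ∈ 𝓑, ∀ i : Fin d,
      |⟪v B, w i⟫| = (1 / (2 * (m : ℝ) + 1)) * ‖v B‖ * ‖w i‖) ∧
    Function.Injective w ∧
    (∀ i j l : Fin d, i ≠ j → i ≠ l → j ≠ l →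
      0 < ⟪w i, w j⟫ * ⟪w i, w l⟫ * ⟪w j, w l⟫) := by
  have hp := GillespieParams.of_nat (by omega) hs₁ hk hdvd hd
  have hvv (B) (hB : B ∈ 𝓑) (C) (hC : C ∈ 𝓑) :=
    hp.inner_blockVectors (hv B hB) (hv C hC) (hcard B hB) (hcard C hC)
  have hvv_self (B) (hB : B ∈ 𝓑) : ⟪v B, v B⟫ = (d : ℝ) ^ 2 * m * (2 * m + 1) / 2 := by
    rw [hvv B hB B hB, inter_self, hcard B hB, hp.k_eq, hp.s₁_eq]; ring
  have hvv_ne (B₁) (h₁ : B₁ ∈ 𝓑) (B₂) (h₂ : B₂ ∈ 𝓑) :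
      ((B₁ ∩ B₂).card = s₁ → ⟪v B₁, v B₂⟫ = (d : ℝ) ^ 2 * m / 2) ∧
      ((B₁ ∩ B₂).card = s₂ → ⟪v B₁, v B₂⟫ = -((d : ℝ) ^ 2 * m / 2)) :=
    ⟨fun h => by rw [hvv B₁ h₁ B₂ h₂, h, hp.s₁_eq]; ring,
      fun h => by rw [hvv B₁ h₁ B₂ h₂, h, hp.s₁_eq]; ring⟩
  have hww_self (i : Fin d) := (inner_pointVectors hp.nonneg (hw i) (hw i)).trans (if_pos rfl)
  have hww_ne (i j : Fin d) (hij : i ≠ j) :=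
    (inner_pointVectors hp.nonneg (hw i) (hw j)).trans (if_neg hij)
  have hvw (B) (hB : B ∈ 𝓑) (i : Fin d) :=
    hp.inner_blockVector_pointVector (hv B hB) (hcard B hB) (hw i)
  have hvw_mem (B) (hB : B ∈ 𝓑) (i : Fin d) :=
    And.intro (fun h : i ∈ B => (hvw B hB i).trans (if_pos h))
      (fun h => (hvw B hB i).trans (if_neg h))
  have hangle : 1 / (2 * (m : ℝ) + 1) * ((d : ℝ) ^ 2 * m * (2 * m + 1) / 2) = d ^ 2 * m / 2 := by
    field_simp
  refine ⟨hvv_self, hww_self, fun B₁ h₁ B₂ h₂ _ => hvv_ne B₁ h₁ B₂ h₂, hww_ne, hvw_mem,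
    fun B₁ h₁ B₂ h₂ hne => ?_, fun i j hij => ?_, fun B hB i => ?_, fun i j hij => ?_,
    fun i j l hij hil hjl => ?_⟩
  · exact abs_real_inner_eq_mul_norm_mul_norm (hvv_self B₁ h₁) (hvv_self B₂ h₂)
      ((hint B₁ h₁ B₂ h₂ hne).imp (hvv_ne B₁ h₁ B₂ h₂).1 (hvv_ne B₁ h₁ B₂ h₂).2)
      (by positivity) hangle
  · exact abs_real_inner_eq_mul_norm_mul_norm (hww_self i) (hww_self j)
      (Or.inl (hww_ne i j hij)) (by positivity) hangle
  · exact abs_real_inner_eq_mul_norm_mul_norm (hvv_self B hB) (hww_self i)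
      ((em (i ∈ B)).imp (hvw_mem B hB i).1 (hvw_mem B hB i).2) (by positivity) hangle
  · by_contra hne
    have hcoord : w i i = w j i := by rw [hij]
    rw [hw, hw, if_pos rfl, if_neg hne] at hcoord
    have hmd : (1 : ℝ) ≤ m * d := by exact_mod_cast Nat.mul_pos hm i.pos
    linarith
  · have hd : (0 : ℝ) < d := by exact_mod_cast i.pos
    rw [hww_ne i j hij, hww_ne i l hil, hww_ne j l hjl]
    positivity
end
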